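/- arXiv:1706.07128 — 5 statements merged into one kernel-verified Lean document; each statement's English description precedes it below -/
import Mathlib

section
/- Assume κ is h-admissible and normalized. Let λ be an ℓ-multipartition all of whose components have at most h columns, let x ∈ ℤ/eℤ, let Y ∈ Add_x(λ), and let μ be the multipartition with [μ] = [λ] ∪ {Y}. Then the one-step degree Σ_{α ∈ Φ⁺, r ∈ ℤ} d_{α,r}(pt(λ), pt(μ)) equals #{A ∈ Add_x(λ) : Y ▷_θ A} − #{R ∈ Rem_x(λ) : Y ▷_θ R}, i.e. the number of addable nodes of λ of residue x lying to the right of Y minus the number of removable nodes of λ of residue x lying to the right of Y. -/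
/-!
Adding `Y` to `λ` moves `pt(λ)` by the basis vector `ε_a` of the column `a` of `Y`, so the
pairing with `ε_i - ε_j` changes only when `a ∈ {i, j}`, and then by `±1`. For the pair `{a, b}`
the local degrees `d_{α,r}` add up to `[A_b] - [R_b]`, where `A_b` is the node just below column
`b`, `R_b` is the bottom node of column `b`, and `[N]` records that `N` has residue `x` and lies
in a lower row than `Y`: the wall condition `e ∣ ⟨pt(λ) + ρ, ε_a - ε_b⟩` is a residue congruence,
and the side of the wall compares column lengths.

By `h`-admissibility and `e > hℓ`, nodes of equal residue in the first `h` columns are ordered by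
`▷_θ` exactly as by their rows, so "in a lower row than `Y`" means "to the right of `Y`". Finally,
an `A_b` that is not addable lies diagonally below-right of `R_{b-1}`, which is then not
removable, and conversely; these terms cancel, leaving addable minus removable nodes.
-/

namespace BC

/-- A node `(r, c, m)`: row `r ≥ 1`, column `c ≥ 1` (1-based), component `m` (0-based). -/
abbrev Node : Type := ℕ × ℕ × ℕ

/-- An `ℓ`-multipartition: `row m r` is the length of the `(r+1)`-st row of the
`(m+1)`-st component. -/
structure MultiPartition (ℓ : ℕ) : Type where
  row : ℕ → ℕ → ℕ
  antitone : ∀ m r, row m (r + 1) ≤ row m r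
  comp_bound : ∀ m, ℓ ≤ m → ∀ r, row m r = 0
  row_finite : ∀ m, ∃ R, ∀ r, R ≤ r → row m r = 0

/-- The number of boxes of a multipartition. -/
noncomputable def size {ℓ : ℕ} (lam : MultiPartition ℓ) : ℕ :=
  ∑ᶠ (m : ℕ), ∑ᶠ (r : ℕ), lam.row m r

/-- The Young diagram of a multipartition, as a set of nodes. -/
def diag {ℓ : ℕ} (lam : MultiPartition ℓ) : Set Node :=
  {b | 1 ≤ b.1 ∧ 1 ≤ b.2.1 ∧ b.2.1 ≤ lam.row b.2.2 (b.1 - 1)}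

/-- The residue `κ_m + c - r` of a node. -/
def res (e : ℕ) (κ : ℕ → ZMod e) (b : Node) : ZMod e :=
  κ b.2.2 + (b.2.1 : ZMod e) - (b.1 : ZMod e)

/-- The (integral part of the) real-line position of a node: `m + ℓ(r - c)` (with
1-based component index). -/
def thetaPos (ℓ : ℕ) (b : Node) : ℤ :=
  ((b.2.2 : ℤ) + 1) + (ℓ : ℤ) * ((b.1 : ℤ) - (b.2.1 : ℤ))

/-- `NodeDom ℓ b b'` means `b ▷_θ b'` (`b` θ-dominates `b'`; `b'` is to the right of `b`). -/
def NodeDom (ℓ : ℕ) (b b' : Node) : Prop :=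
  thetaPos ℓ b < thetaPos ℓ b' ∨
    (thetaPos ℓ b = thetaPos ℓ b' ∧ b.1 + b.2.1 < b'.1 + b'.2.1)

/-- A set of nodes is the Young diagram of some `ℓ`-multipartition. -/
def IsDiag (ℓ : ℕ) (D : Set Node) : Prop := ∃ lam : MultiPartition ℓ, diag lam = D

/-- `b` is a removable node of the diagram `D`. -/
def RemD (ℓ : ℕ) (D : Set Node) (b : Node) : Prop := b ∈ D ∧ IsDiag ℓ (D \ {b})

/-- `b` is an addable node (in one of the first `h` columns) of the diagram `D`. -/
def AddD (h ℓ : ℕ) (D : Set Node) (b : Node) : Prop :=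
  1 ≤ b.2.1 ∧ b.2.1 ≤ h ∧ b ∉ D ∧ IsDiag ℓ (D ∪ {b})

/-- All components of `lam` have at most `h` columns. -/
def HCols (h : ℕ) {ℓ : ℕ} (lam : MultiPartition ℓ) : Prop := ∀ m r, lam.row m r ≤ h

/-- `κ` is `h`-admissible: for every `i ∈ ℤ/eℤ` at most one component index `m < ℓ`
satisfies `κ m ∈ {i, i+1, …, i+h-1}`. -/
def HAdmissible (e h ℓ : ℕ) (κ : ℕ → ZMod e) : Prop :=
  ∀ (i : ZMod e) (m t : ℕ), m < ℓ → t < ℓ →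
    (∃ d : ℕ, d < h ∧ κ m = i + (d : ZMod e)) →
    (∃ d : ℕ, d < h ∧ κ t = i + (d : ZMod e)) → m = t

/-- `κ` is normalized: lifting to `{0, …, e-1}` one has `κ_1 < κ_2 < ⋯ < κ_ℓ` and
`κ_ℓ + h ≢ κ_1 (mod e)`. -/
def Normalized (e h ℓ : ℕ) (κ : ℕ → ZMod e) : Prop :=
  (∀ m t : ℕ, m < t → t < ℓ → (κ m).val < (κ t).val) ∧
    κ (ℓ - 1) + (h : ZMod e) ≠ κ 0

/-- The shift vector `ρ` (0-based index `a = h·(m-1) + (i-1)` gives `ρ_a = e - κ_m - i + 1`). -/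
def rhoZ (e h : ℕ) (κ : ℕ → ZMod e) (a : ℕ) : ℤ :=
  (e : ℤ) - ((κ (a / h)).val : ℤ) - ((a % h : ℕ) : ℤ)

/-- The pairing `⟨x + ρ, ε_i - ε_j⟩`. -/
def pairV (e h : ℕ) (κ : ℕ → ZMod e) (x : ℕ → ℝ) (i j : ℕ) : ℝ :=
  (x i + (rhoZ e h κ i : ℝ)) - (x j + (rhoZ e h κ j : ℝ))

/-- `x` lies on the hyperplane `E(ε_i - ε_j, re)`. -/
def OnWall (e h : ℕ) (κ : ℕ → ZMod e) (x : ℕ → ℝ) (i j : ℕ) (r : ℤ) : Prop :=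
  pairV e h κ x i j = (r : ℝ) * (e : ℝ)

/-- `x ∈ E^<(ε_i - ε_j, re)`: `⟨x+ρ,α⟩ - re` and `⟨ρ,α⟩ - re` are nonzero of the same sign. -/
def InLt (e h : ℕ) (κ : ℕ → ZMod e) (x : ℕ → ℝ) (i j : ℕ) (r : ℤ) : Prop :=
  0 < (pairV e h κ x i j - (r : ℝ) * (e : ℝ)) *
      (pairV e h κ (fun _ => 0) i j - (r : ℝ) * (e : ℝ))

/-- `x ∈ E^>(ε_i - ε_j, re)`: `⟨x+ρ,α⟩ - re` and `⟨ρ,α⟩ - re` are nonzero of opposite signs. -/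
def InGt (e h : ℕ) (κ : ℕ → ZMod e) (x : ℕ → ℝ) (i j : ℕ) (r : ℤ) : Prop :=
  (pairV e h κ x i j - (r : ℝ) * (e : ℝ)) *
      (pairV e h κ (fun _ => 0) i j - (r : ℝ) * (e : ℝ)) < 0

/-- The reflection `s_{ε_i - ε_j, re} · x = x - (⟨x+ρ,α⟩ - re) α`. -/
def reflV (e h : ℕ) (κ : ℕ → ZMod e) (i j : ℕ) (r : ℤ) (x : ℕ → ℝ) : ℕ → ℝ :=
  fun a => x a - (pairV e h κ x i j - (r : ℝ) * (e : ℝ)) *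
    ((if a = i then (1 : ℝ) else 0) - (if a = j then (1 : ℝ) else 0))

-- The local degree contribution `d_{α,r}(x,y)` for `α = ε_i - ε_j`.
open Classical in
noncomputable def dval (e h : ℕ) (κ : ℕ → ZMod e) (x y : ℕ → ℝ) (i j : ℕ) (r : ℤ) : ℤ :=
  if OnWall e h κ x i j r ∧ InLt e h κ y i j r then 1
  else if InGt e h κ x i j r ∧ OnWall e h κ y i j r then -1
  else 0

-- The degree `d(x, y) = Σ_{α ∈ Φ⁺, r ∈ ℤ} d_{α,r}(x,y)` of a single step.
open Classical in
noncomputable def stepDeg (e h ℓ : ℕ) (κ : ℕ → ZMod e) (x y : ℕ → ℝ) : ℤ :=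
  ∑ i ∈ Finset.range (h * ℓ), ∑ j ∈ Finset.range (h * ℓ),
    if i < j then ∑ᶠ r : ℤ, dval e h κ x y i j r else 0

/-- The `k`-th point `s(k) = ε_{s(1)} + ⋯ + ε_{s(k)}` of a path (with 0-based steps). -/
def pts (s : ℕ → ℕ) (k : ℕ) : ℕ → ℝ :=
  fun a => ((Finset.filter (fun i => s i = a) (Finset.range k)).card : ℝ)

/-- `s` is a (normalized) path of length `n` with steps among `ε_1, …, ε_N`. -/
def IsPath (N n : ℕ) (s : ℕ → ℕ) : Prop :=
  (∀ k, k < n → s k < N) ∧ (∀ k, n ≤ k → s k = 0)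

/-- The degree of a path of length `n`. -/
noncomputable def pathDeg (e h ℓ : ℕ) (κ : ℕ → ZMod e) (n : ℕ) (s : ℕ → ℕ) : ℤ :=
  ∑ k ∈ Finset.range n, stepDeg e h ℓ κ (pts s k) (pts s (k + 1))

/-- `t` is obtained from `s` by one reflection `s^k_{α,re}` (at a point of `s` lying
on the corresponding hyperplane). -/
def ReflStep (e h ℓ n : ℕ) (κ : ℕ → ZMod e) (s t : ℕ → ℕ) : Prop :=
  IsPath (h * ℓ) n s ∧ IsPath (h * ℓ) n t ∧
  ∃ (k i j : ℕ) (r : ℤ), 1 ≤ k ∧ k ≤ n ∧ i < j ∧ j < h * ℓ ∧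
    OnWall e h κ (pts s k) i j r ∧
    (∀ l, l ≤ k → pts t l = pts s l) ∧
    (∀ l, k ≤ l → l ≤ n → pts t l = reflV e h κ i j r (pts s l))

/-- `PathSim … s t` : the path `t` can be obtained from `s` by finitely many reflections,
i.e. `t ∼ s`. -/
def PathSim (e h ℓ n : ℕ) (κ : ℕ → ZMod e) (s t : ℕ → ℕ) : Prop :=
  Relation.ReflTransGen (ReflStep e h ℓ n κ) s t

/-- A path is dominant if all of its points lie in the (closed interior of the)
dominant Weyl chamber. -/
def DominantPath (e h ℓ n : ℕ) (κ : ℕ → ZMod e) (s : ℕ → ℕ) : Prop :=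
  ∀ k, k ≤ n → ∀ m i j, m < ℓ → i < j → j < h →
    0 < pairV e h κ (pts s k) (h * m + i) (h * m + j)

/-- The length of the `i`-th column (1-based) of the `(m+1)`-st component. -/
noncomputable def colLen {ℓ : ℕ} (lam : MultiPartition ℓ) (m i : ℕ) : ℕ :=
  Set.ncard {r : ℕ | i ≤ lam.row m r}

/-- The point `pt(λ) ∈ E` associated to a multipartition. -/
noncomputable def ptv (h : ℕ) {ℓ : ℕ} (lam : MultiPartition ℓ) : ℕ → ℝ :=
  fun a => (colLen lam (a / h) (a % h + 1) : ℝ)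

/-- The point of `E` associated to a Young diagram (as a set of nodes). -/
noncomputable def ptD (h : ℕ) (D : Set Node) : ℕ → ℝ :=
  fun a => (Set.ncard {r : ℕ | ((r + 1 : ℕ), ((a % h) + 1 : ℕ), (a / h : ℕ)) ∈ D} : ℝ)

/-- `X` is the least dominant removable node of `D`: it is removable and θ-dominated by
every other removable node. -/
def IsLeastRem (ℓ : ℕ) (D : Set Node) (X : Node) : Prop :=
  RemD ℓ D X ∧ ∀ Y, RemD ℓ D Y → Y ≠ X → NodeDom ℓ Y X

/-- The least dominant removable node of a diagram (chosen by `Classical.epsilon`). -/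
noncomputable def leastRem (ℓ : ℕ) (D : Set Node) : Node :=
  Classical.epsilon (IsLeastRem ℓ D)

/-- `PDiag ℓ D j` is the diagram `D` with its least dominant removable node removed `j`
times; for `D = [μ]` with `|μ| = n` this is `μ^{(n-j)}`. -/
noncomputable def PDiag (ℓ : ℕ) (D : Set Node) : ℕ → Set Node
  | 0 => D
  | j + 1 => PDiag ℓ D j \ {leastRem ℓ (PDiag ℓ D j)}

/-- The distinguished path `t^μ` of length `n`: its `k`-th step (0-based) is the basis
direction of the column of `X_{k+1}`, the least dominant removable node of `μ^{(k+1)}`. -/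
noncomputable def tPath (h ℓ n : ℕ) (μ : MultiPartition ℓ) : ℕ → ℕ :=
  fun k =>
    if k < n then
      h * (leastRem ℓ (PDiag ℓ (diag μ) (n - 1 - k))).2.2 +
        ((leastRem ℓ (PDiag ℓ (diag μ) (n - 1 - k))).2.1 - 1)
    else 0

/-- `u ↑_{α,re} v` : `u = s_{α,re}·v`, `u ∈ E^<(α,re)`, `v ∈ E^>(α,re)`. -/
def UpStep (e h ℓ : ℕ) (κ : ℕ → ZMod e) (u v : ℕ → ℝ) : Prop :=
  ∃ (i j : ℕ) (r : ℤ), i < j ∧ j < h * ℓ ∧ u = reflV e h κ i j r v ∧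
    InLt e h κ u i j r ∧ InGt e h κ v i j r

/-- The strong linkage order: `Up … u v` means `u ↑ v`. -/
def Up (e h ℓ : ℕ) (κ : ℕ → ZMod e) : (ℕ → ℝ) → (ℕ → ℝ) → Prop :=
  Relation.ReflTransGen (UpStep e h ℓ κ)

/-- The length `ℓ(v)`: the number of hyperplanes lying strictly between `v` and the
origin. -/
noncomputable def lenPt (e h ℓ : ℕ) (κ : ℕ → ZMod e) (v : ℕ → ℝ) : ℕ :=
  Set.ncard {p : ℕ × ℕ × ℤ | p.1 < p.2.1 ∧ p.2.1 < h * ℓ ∧ InGt e h κ v p.1 p.2.1 p.2.2}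

/-- The loading `I_{(r,c,m)} = m + ℓ(r-c) + (r+c)ε` of a node (with 1-based component). -/
def load (ℓ : ℕ) (ε : ℝ) (b : Node) : ℝ :=
  ((b.2.2 : ℝ) + 1) + (ℓ : ℝ) * ((b.1 : ℝ) - (b.2.1 : ℝ)) + ((b.1 : ℝ) + (b.2.1 : ℝ)) * ε

/-- `T` is a residue-respecting semistandard tableau of shape the diagram `D` and weight
the diagram `Dw`, normalized to vanish off `D`. -/
def IsSStd (e ℓ : ℕ) (κ : ℕ → ZMod e) (ε : ℝ) (D Dw : Set Node) (T : Node → ℝ) : Prop :=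
  Set.BijOn T D (load ℓ ε '' Dw) ∧
  (∀ b ∈ D, b.1 = 1 → b.2.1 = 1 → ((b.2.2 : ℝ) + 1) < T b) ∧
  (∀ b ∈ D, 2 ≤ b.1 → T (b.1 - 1, b.2.1, b.2.2) + (ℓ : ℝ) < T b) ∧
  (∀ b ∈ D, 2 ≤ b.2.1 → T (b.1, b.2.1 - 1, b.2.2) - (ℓ : ℝ) < T b) ∧
  (∀ b ∈ D, ∀ b' ∈ Dw, T b = load ℓ ε b' → res e κ b = res e κ b') ∧
  (∀ b, b ∉ D → T b = 0)

/-- The node `Y_{k+1}` of the tableau `T`: the node of the shape diagram whose entry is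
the loading of `X_{k+1}`. -/
noncomputable def Ynd (ℓ n : ℕ) (ε : ℝ) (Dlam Dmu : Set Node) (T : Node → ℝ) (k : ℕ) :
    Node :=
  Classical.epsilon (fun b : Node =>
    b ∈ Dlam ∧ T b = load ℓ ε (leastRem ℓ (PDiag ℓ Dmu (n - 1 - k))))

/-- The path `ω(T)` associated to a semistandard tableau. -/
noncomputable def omegaT (h ℓ n : ℕ) (ε : ℝ) (Dlam Dmu : Set Node) (T : Node → ℝ) :
    ℕ → ℕ :=
  fun k =>
    if k < n then
      h * (Ynd ℓ n ε Dlam Dmu T k).2.2 + ((Ynd ℓ n ε Dlam Dmu T k).2.1 - 1)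
    else 0

/-- The shape `λ^{(k)}` of the restriction of the tableau `T` to entries in `I_{μ^{(k)}}`. -/
noncomputable def LShape (ℓ n : ℕ) (ε : ℝ) (Dlam Dmu : Set Node) (T : Node → ℝ) (k : ℕ) :
    Set Node :=
  {b | b ∈ Dlam ∧ T b ∈ load ℓ ε '' PDiag ℓ Dmu (n - k)}

/-- The degree of a semistandard tableau, computed from its component word. -/
noncomputable def degT (e h ℓ n : ℕ) (κ : ℕ → ZMod e) (ε : ℝ) (Dlam Dmu : Set Node)
    (T : Node → ℝ) : ℤ :=
  ∑ k ∈ Finset.range n,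
    ((Set.ncard {A | AddD h ℓ (LShape ℓ n ε Dlam Dmu T k) A ∧
        res e κ A = res e κ (Ynd ℓ n ε Dlam Dmu T k) ∧
        NodeDom ℓ (Ynd ℓ n ε Dlam Dmu T k) A} : ℤ) -
      (Set.ncard {R | RemD ℓ (LShape ℓ n ε Dlam Dmu T k) R ∧
        res e κ R = res e κ (Ynd ℓ n ε Dlam Dmu T k) ∧
        NodeDom ℓ (Ynd ℓ n ε Dlam Dmu T k) R} : ℤ))

/-- The θ-dominance order on multipartitions: `ThetaDomMP e ℓ κ μ lam` means `μ ⊴_θ λ`. -/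
noncomputable def ThetaDomMP (e ℓ : ℕ) (κ : ℕ → ZMod e) (μ lam : MultiPartition ℓ) : Prop :=
  ∀ b ∈ diag μ,
    Set.ncard {b' | b' ∈ diag μ ∧ res e κ b' = res e κ b ∧ NodeDom ℓ b' b} ≤
      Set.ncard {b' | b' ∈ diag lam ∧ res e κ b' = res e κ b ∧ NodeDom ℓ b' b}

/-- The multipartition `det_h(λ)`, obtained by prepending a row of length `h` to each
component. -/
def detMP (h : ℕ) {ℓ : ℕ} (lam : MultiPartition ℓ) (hc : HCols h lam) : MultiPartition ℓ where
  row m r := if m < ℓ then (if r = 0 then h else lam.row m (r - 1)) else 0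
  antitone m r := by
    by_cases hm : m < ℓ
    · by_cases hr : r = 0
      · subst hr
        simpa [hm] using hc m 0
      · have h2 : r - 1 + 1 = r := Nat.succ_pred_eq_of_pos (Nat.pos_of_ne_zero hr)
        have h3 := lam.antitone m (r - 1)
        rw [h2] at h3
        simpa [hm, hr] using h3
    · simp [hm]
  comp_bound m hm r := by simp [Nat.not_lt.mpr hm]
  row_finite m := by
    obtain ⟨R, hR⟩ := lam.row_finite m
    refine ⟨R + 1, fun r hr => ?_⟩
    by_cases hm : m < ℓ
    · have hr0 : r ≠ 0 := by omega
      simp only [hm, if_true, hr0, if_false]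
      exact hR (r - 1) (by omega)
    · simp [hm]

/-- The path `det(s)`: first the `N = hℓ` steps `ε_1, …, ε_{hℓ}`, then the steps of `s`. -/
def detPath (N n : ℕ) (s : ℕ → ℕ) : ℕ → ℕ :=
  fun k => if k < N then k else if k < N + n then s (k - N) else 0


section ColLen

variable {ℓ : ℕ} (lam : MultiPartition ℓ)

lemma MultiPartition.row_antitone (m : ℕ) : Antitone (lam.row m) :=
  antitone_nat_of_succ_le (lam.antitone m)

lemma lt_colLen_iff {c : ℕ} (hc : 1 ≤ c) (m r : ℕ) : r < colLen lam m c ↔ c ≤ lam.row m r := by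
  classical
  have hend : ∃ r, lam.row m r < c := by
    obtain ⟨R, hR⟩ := lam.row_finite m
    exact ⟨R, by rw [hR R le_rfl]; omega⟩
  have hset : {r | c ≤ lam.row m r} = Set.Iio (Nat.find hend) := by
    ext r
    simp only [Set.mem_ofPred_eq, Set.mem_Iio, Nat.lt_find_iff, not_lt]
    exact ⟨fun hr s hs => hr.trans (lam.row_antitone m hs), fun hr => hr r le_rfl⟩
  rw [colLen, hset, Set.ncard_Iio_nat, ← Set.mem_Iio, ← hset, Set.mem_ofPred_eq]

lemma mem_diag_succ_iff (r c m : ℕ) :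
    ((r + 1, c, m) : Node) ∈ diag lam ↔ 1 ≤ c ∧ r < colLen lam m c := by
  simp only [diag, Set.mem_ofPred_eq, le_add_iff_nonneg_left, zero_le, true_and,
    Nat.add_sub_cancel]
  exact ⟨fun h => ⟨h.1, (lt_colLen_iff lam h.1 m r).2 h.2⟩,
    fun h => ⟨h.1, (lt_colLen_iff lam h.1 m r).1 h.2⟩⟩

lemma colLen_antitone {c c' : ℕ} (hc : 1 ≤ c) (hcc' : c ≤ c') (m : ℕ) :
    colLen lam m c' ≤ colLen lam m c := by
  by_contra! hlt
  have hrow := (lt_colLen_iff lam (hc.trans hcc') m _).1 hlt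
  exact lt_irrefl _ ((lt_colLen_iff lam hc m _).2 (hcc'.trans hrow))

lemma colLen_eq_zero_of_lt {h : ℕ} (hcols : HCols h lam) {c : ℕ} (hc : h < c) (m : ℕ) :
    colLen lam m c = 0 := by
  by_contra hne
  have := (lt_colLen_iff lam (c := c) (by omega) m 0).1 (by omega)
  have := hcols m 0
  omega

lemma MultiPartition.comp_lt_of_mem_diag {b : Node} (hb : b ∈ diag lam) : b.2.2 < ℓ := by
  by_contra! hm
  have := hb.2.2
  rw [lam.comp_bound _ hm] at this
  have := hb.2.1
  omega

end ColLen

section AddRemove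

variable {ℓ : ℕ}

lemma colLen_of_diag_eq_union {lam ν : MultiPartition ℓ} {r c m : ℕ} (hc : 1 ≤ c)
    (hnot : ((r, c, m) : Node) ∉ diag lam) (hν : diag ν = diag lam ∪ {((r, c, m) : Node)}) :
    r = colLen lam m c + 1 ∧
      ∀ m' c', 1 ≤ c' → colLen ν m' c' = colLen lam m' c' + if m' = m ∧ c' = c then 1 else 0 := by
  have hr : 1 ≤ r := (hν ▸ Or.inr rfl : ((r, c, m) : Node) ∈ diag ν).1
  have key : ∀ m' c' s, 1 ≤ c' →
      (s < colLen ν m' c' ↔ s < colLen lam m' c' ∨ (m' = m ∧ c' = c ∧ s + 1 = r)) := by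
    intro m' c' s hc'
    have hmem := mem_diag_succ_iff ν s c' m'
    rw [hν, Set.mem_union, mem_diag_succ_iff, Set.mem_singleton_iff] at hmem
    simp only [hc', true_and, Prod.mk.injEq] at hmem
    rw [← hmem]
    tauto
  have hlen : colLen lam m c ≤ r - 1 := by
    rw [← Nat.sub_add_cancel hr, mem_diag_succ_iff] at hnot
    exact not_lt.1 fun h => hnot ⟨hc, h⟩
  have hcol : colLen ν m c = colLen lam m c + 1 ∧ r = colLen lam m c + 1 := by
    have k1 := key m c (colLen lam m c) hc
    have k2 := key m c (r - 1) hc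
    have k3 := key m c (colLen lam m c + 1) hc
    simp only [true_and] at k1 k2 k3
    omega
  refine ⟨hcol.2, fun m' c' hc' => ?_⟩
  split_ifs with hmc
  · rw [hmc.1, hmc.2, hcol.1]
  · have k1 := key m' c' (colLen lam m' c') hc'
    have k2 := key m' c' (colLen ν m' c') hc'
    have hne : ∀ s, ¬ (m' = m ∧ c' = c ∧ s + 1 = r) := fun _ h => hmc ⟨h.1, h.2.1⟩
    simp only [hne, or_false] at k1 k2
    omega

lemma MultiPartition.exists_update (lam : MultiPartition ℓ) {m r₀ v : ℕ} (hm : m < ℓ)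
    (hle : ∀ r < r₀, v ≤ lam.row m r) (hge : ∀ r, r₀ < r → lam.row m r ≤ v) :
    ∃ ν : MultiPartition ℓ, ∀ m' r, ν.row m' r = if m' = m ∧ r = r₀ then v else lam.row m' r := by
  refine ⟨⟨fun m' r => if m' = m ∧ r = r₀ then v else lam.row m' r, ?_, ?_, ?_⟩, fun _ _ => rfl⟩
  · intro m' r
    split_ifs with h1 h2 h2
    · omega
    · exact h1.1 ▸ hle r (by omega)
    · exact h2.1 ▸ hge _ (by omega)
    · exact lam.antitone m' r
  · intro m' hm' r
    rw [if_neg (by omega), lam.comp_bound m' hm' r]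
  · intro m'
    obtain ⟨R, hR⟩ := lam.row_finite m'
    exact ⟨max R (r₀ + 1), fun r hr => by rw [if_neg (by omega), hR r (by omega)]⟩

lemma addD_iff {h : ℕ} (lam : MultiPartition ℓ) (r c m : ℕ) :
    AddD h ℓ (diag lam) (r, c, m) ↔
      1 ≤ c ∧ c ≤ h ∧ m < ℓ ∧ r = colLen lam m c + 1 ∧ (c = 1 ∨ r ≤ colLen lam m (c - 1)) := by
  constructor
  · rintro ⟨hc, hch, hnot, ν, hν⟩
    dsimp only at hc hch
    obtain ⟨hr, hcol⟩ := colLen_of_diag_eq_union hc hnot hν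
    have hm := ν.comp_lt_of_mem_diag (hν ▸ Or.inr rfl : ((r, c, m) : Node) ∈ diag ν)
    refine ⟨hc, hch, hm, hr, or_iff_not_imp_left.2 fun hc1 => ?_⟩
    have h1 := hcol m c hc
    have h2 := hcol m (c - 1) (by omega)
    have h3 := colLen_antitone ν (c := c - 1) (c' := c) (by omega) (by omega) m
    simp only [and_self, if_true, show ¬ c - 1 = c by omega, and_false, if_false] at h1 h2
    omega
  · rintro ⟨hc, hch, hm, rfl, hprev⟩
    set r := colLen lam m c
    have hrow : lam.row m r = c - 1 := by
      have h1 := (lt_colLen_iff lam hc m r).not.1 (lt_irrefl _)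
      by_cases hc1 : c = 1
      · omega
      · have := (lt_colLen_iff lam (c := c - 1) (by omega) m r).1 (hprev.resolve_left hc1)
        omega
    obtain ⟨ν, hν⟩ := lam.exists_update (v := c) (r₀ := r) hm
      (fun s hs => (lt_colLen_iff lam hc m s).1 hs)
      (fun s hs => (lam.row_antitone m hs.le).trans (by omega))
    refine ⟨hc, hch, fun hmem => (lt_irrefl r) ((mem_diag_succ_iff lam r c m).1 hmem).2, ν, ?_⟩
    ext ⟨_ | s, cb, mb⟩
    · simp [diag]
    · simp only [diag, Set.mem_ofPred_eq, Set.mem_union, Set.mem_singleton_iff, Prod.mk.injEq, hν,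
        Nat.add_sub_cancel, le_add_iff_nonneg_left, zero_le, true_and, Nat.add_right_cancel_iff]
      split_ifs with hb
      · obtain ⟨rfl, rfl⟩ := hb
        omega
      · have : ¬ (s = r ∧ cb = c ∧ mb = m) := fun h' => hb ⟨h'.2.2, h'.1⟩
        simp only [this, or_false]

lemma remD_iff (lam : MultiPartition ℓ) (r c m : ℕ) :
    RemD ℓ (diag lam) (r, c, m) ↔
      1 ≤ c ∧ 1 ≤ r ∧ m < ℓ ∧ r = colLen lam m c ∧ colLen lam m (c + 1) < r := by
  constructor
  · rintro ⟨hmem, ν, hν⟩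
    have hc : 1 ≤ c := hmem.2.1
    have hunion : diag lam = diag ν ∪ {((r, c, m) : Node)} := by
      rw [hν, Set.sdiff_union_self, Set.union_eq_left.2 (Set.singleton_subset_iff.2 hmem)]
    obtain ⟨hr, hcol⟩ := colLen_of_diag_eq_union hc (by simp [hν]) hunion
    have h1 := hcol m c hc
    have h2 := hcol m (c + 1) (by omega)
    have h3 := colLen_antitone ν hc (c' := c + 1) (by omega) m
    simp only [and_self, if_true, show ¬ c + 1 = c by omega, and_false, if_false] at h1 h2
    exact ⟨hc, hmem.1, lam.comp_lt_of_mem_diag hmem, by omega, by omega⟩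
  · rintro ⟨hc, hr, hm, hcol, hnext⟩
    obtain ⟨r, rfl⟩ : ∃ r', r = r' + 1 := ⟨r - 1, by omega⟩
    have hrow : lam.row m r = c := by
      have h1 := (lt_colLen_iff lam hc m r).1 (by omega)
      have h2 := (lt_colLen_iff lam (c := c + 1) (by omega) m r).not.1 (by omega)
      omega
    obtain ⟨ν, hν⟩ := lam.exists_update (v := c - 1) (r₀ := r) hm
      (fun s hs => (lam.row_antitone m hs.le).trans' (by omega))
      (fun s hs => by have := (lt_colLen_iff lam hc m s).not.1 (by omega); omega)
    refine ⟨⟨by omega, hc, by simp [hrow]⟩, ν, ?_⟩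
    ext ⟨_ | s, cb, mb⟩
    · simp [diag]
    · simp only [diag, Set.mem_ofPred_eq, Set.mem_sdiff, Set.mem_singleton_iff, Prod.mk.injEq, hν,
        Nat.add_sub_cancel, le_add_iff_nonneg_left, zero_le, true_and, Nat.add_right_cancel_iff]
      split_ifs with hb
      · obtain ⟨rfl, rfl⟩ := hb
        omega
      · have : ¬ (s = r ∧ cb = c ∧ mb = m) := fun h' => hb ⟨h'.2.2, h'.1⟩
        simp only [this, not_false_eq_true, and_true]

end AddRemove

section InCols

def InCols (h ℓ : ℕ) (b : Node) : Prop := 1 ≤ b.2.1 ∧ b.2.1 ≤ h ∧ b.2.2 < ℓ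

variable {h ℓ : ℕ}

lemma inCols_of_addD {lam : MultiPartition ℓ} {A : Node} (hA : AddD h ℓ (diag lam) A) :
    InCols h ℓ A := by
  obtain ⟨r, c, m⟩ := A
  obtain ⟨hc, hch, hm, -⟩ := (addD_iff lam r c m).1 hA
  exact ⟨hc, hch, hm⟩

lemma inCols_of_mem_diag {lam : MultiPartition ℓ} (hcols : HCols h lam) {b : Node}
    (hb : b ∈ diag lam) : InCols h ℓ b :=
  ⟨hb.2.1, hb.2.2.trans (hcols _ _), lam.comp_lt_of_mem_diag hb⟩

end InCols

section Columns

open Finset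

variable {ℓ : ℕ} (lam : MultiPartition ℓ)

-- Index `b` stands for column `b % h + 1` of component `b / h`, as in `ptv`; `colLast` of an
-- empty column is a node in row `0`.
noncomputable def colNext (h : ℕ) (b : ℕ) : Node :=
  (colLen lam (b / h) (b % h + 1) + 1, b % h + 1, b / h)

noncomputable def colLast (h : ℕ) (b : ℕ) : Node :=
  (colLen lam (b / h) (b % h + 1), b % h + 1, b / h)

variable {h : ℕ}

lemma div_mod_eq_of_eq_mul_add (hh : 0 < h) {b q c : ℕ} (hc : c < h) (hb : b = h * q + c) :
    b / h = q ∧ b % h = c :=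
  (Nat.div_mod_unique hh).2 ⟨by omega, hc⟩

lemma mul_add_lt_mul_of_lt {q c : ℕ} (hc : c < h) (hq : q < ℓ) : h * q + c < h * ℓ := by
  nlinarith

lemma eq_of_div_eq_of_mod_eq {b b' : ℕ} (hdiv : b / h = b' / h) (hmod : b % h = b' % h) :
    b = b' := by
  rw [← Nat.div_add_mod b h, ← Nat.div_add_mod b' h, hdiv, hmod]

lemma colNext_injective : Function.Injective (colNext lam h) := fun b b' hbb' => by
  simp only [colNext, Prod.mk.injEq] at hbb'
  exact eq_of_div_eq_of_mod_eq hbb'.2.2 (by omega)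

lemma colLast_injective : Function.Injective (colLast lam h) := fun b b' hbb' => by
  simp only [colLast, Prod.mk.injEq] at hbb'
  exact eq_of_div_eq_of_mod_eq hbb'.2.2 (by omega)

lemma addD_colNext_iff {b : ℕ} (hb : b < h * ℓ) :
    AddD h ℓ (diag lam) (colNext lam h b) ↔
      b % h = 0 ∨ colLen lam (b / h) (b % h + 1) < colLen lam (b / h) (b % h) := by
  have hh : 0 < h := Nat.pos_of_mul_pos_right (by omega : 0 < h * ℓ)
  have hq : b / h < ℓ := Nat.div_lt_of_lt_mul hb
  have hc := Nat.mod_lt b hh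
  rw [colNext, addD_iff]
  simp only [le_add_iff_nonneg_left, zero_le, hq, true_and, Nat.add_sub_cancel]
  omega

lemma remD_colLast_iff {b : ℕ} (hb : b < h * ℓ) :
    RemD ℓ (diag lam) (colLast lam h b) ↔
      0 < colLen lam (b / h) (b % h + 1) ∧
        colLen lam (b / h) (b % h + 2) < colLen lam (b / h) (b % h + 1) := by
  rw [colLast, remD_iff]
  simp only [le_add_iff_nonneg_left, zero_le, Nat.div_lt_of_lt_mul hb, true_and, add_assoc,
    Nat.reduceAdd]
  omega

lemma exists_colNext_eq_of_addD {A : Node} (hA : AddD h ℓ (diag lam) A) :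
    ∃ b < h * ℓ, colNext lam h b = A := by
  obtain ⟨r, c, m⟩ := A
  obtain ⟨hc, hch, hm, rfl, -⟩ := (addD_iff lam r c m).1 hA
  obtain ⟨hdiv, hmod⟩ := div_mod_eq_of_eq_mul_add (b := h * m + (c - 1)) (by omega) (by omega) rfl
  refine ⟨_, mul_add_lt_mul_of_lt (c := c - 1) (by omega) hm, ?_⟩
  simp only [colNext, hdiv, hmod, Nat.sub_add_cancel hc]

lemma exists_colLast_eq_of_remD (hcols : HCols h lam) {R : Node} (hR : RemD ℓ (diag lam) R) :
    ∃ b < h * ℓ, colLast lam h b = R := by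
  obtain ⟨r, c, m⟩ := R
  have hch : c ≤ h := hR.1.2.2.trans (hcols _ _)
  obtain ⟨hc, -, hm, rfl, -⟩ := (remD_iff lam r c m).1 hR
  obtain ⟨hdiv, hmod⟩ := div_mod_eq_of_eq_mul_add (b := h * m + (c - 1)) (by omega) (by omega) rfl
  refine ⟨_, mul_add_lt_mul_of_lt (c := c - 1) (by omega) hm, ?_⟩
  simp only [colLast, hdiv, hmod, Nat.sub_add_cancel hc]

end Columns

section Residue

variable {e : ℕ} (κ : ℕ → ZMod e)

lemma res_succ_succ (r c m : ℕ) : res e κ (r + 1, c + 1, m) = res e κ (r, c, m) := by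
  simp only [res]; push_cast; ring

lemma res_succ_row (r c m : ℕ) : res e κ (r + 1, c, m) = res e κ (r, c, m) - 1 := by
  simp only [res]; push_cast; ring

lemma intCast_add_rhoZ [NeZero e] (h L b : ℕ) :
    (((L : ℤ) + rhoZ e h κ b : ℤ) : ZMod e) = -res e κ (L + 1, b % h + 1, b / h) := by
  simp only [rhoZ, res, Int.cast_add, Int.cast_sub, Int.cast_natCast, ZMod.natCast_zmod_val,
    ZMod.natCast_self]
  push_cast
  ring

def content (b : Node) : ℤ := (b.2.1 : ℤ) - b.1

variable {h ℓ : ℕ} {κ} (hadm : HAdmissible e h ℓ κ) (hhe : h ≤ e)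
include hadm hhe

/- `κ_q - κ_p ≡ content p - content q (mod e)`; a difference of size less than `h` is excluded
by `h`-admissibility across components and by `h ≤ e` within one component. -/
lemma content_sep_of_res_eq {p q : Node} (hp : p.2.2 < ℓ) (hq : q.2.2 < ℓ)
    (hres : res e κ p = res e κ q) :
    (content p = content q ∧ p.2.2 = q.2.2) ∨ content q + h ≤ content p ∨
      content p + h ≤ content q := by
  obtain ⟨rp, cp, mp⟩ := p
  obtain ⟨rq, cq, mq⟩ := q
  simp only [content] at *
  set D : ℤ := ((cp : ℤ) - rp) - ((cq : ℤ) - rq)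
  have hκ : κ mq = κ mp + (D : ZMod e) := by
    simp only [res] at hres
    push_cast [D]
    linear_combination -hres
  by_contra! hne
  rcases eq_or_ne mp mq with rfl | hm
  · have hD : (D : ZMod e) = 0 := by simpa using hκ
    rw [ZMod.intCast_zmod_eq_zero_iff_dvd] at hD
    exact hne.1 (by linarith [Int.eq_zero_of_abs_lt_dvd hD (by rw [abs_lt]; omega)]) rfl
  · rcases le_or_gt 0 D with hD | hD
    · refine hm (hadm (κ mp) mq mp hq hp ⟨D.toNat, by omega, ?_⟩ ⟨0, by omega, by simp⟩).symm
      rw [hκ, ← Int.cast_natCast, Int.toNat_of_nonneg hD]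
    · refine hm (hadm (κ mq) mp mq hp hq ⟨(-D).toNat, by omega, ?_⟩ ⟨0, by omega, by simp⟩)
      rw [hκ, ← Int.cast_natCast, Int.toNat_of_nonneg (by omega)]
      push_cast
      ring

lemma nodeDom_iff_of_res_eq {p q : Node} (hp : InCols h ℓ p) (hq : InCols h ℓ q)
    (hres : res e κ p = res e κ q) : NodeDom ℓ p q ↔ p.1 < q.1 := by
  have hsep := content_sep_of_res_eq hadm hhe hp.2.2 hq.2.2 hres
  have hθ : thetaPos ℓ q - thetaPos ℓ p = ((q.2.2 : ℤ) - p.2.2) + ℓ * (content p - content q) := by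
    simp only [thetaPos, content]; ring
  obtain ⟨rp, cp, mp⟩ := p
  obtain ⟨rq, cq, mq⟩ := q
  obtain ⟨hp1, hph, hpl⟩ := hp
  obtain ⟨hq1, hqh, hql⟩ := hq
  have hcp : content (rp, cp, mp) = cp - rp := rfl
  have hcq : content (rq, cq, mq) = cq - rq := rfl
  dsimp only at *
  simp only [NodeDom]
  rcases hsep with ⟨hD, rfl⟩ | hD | hD
  · simp only [hD, sub_self, mul_zero, add_zero] at hθ
    omega
  · have : (ℓ : ℤ) ≤ ℓ * (content (rp, cp, mp) - content (rq, cq, mq)) :=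
      le_mul_of_one_le_right (by positivity) (by omega)
    omega
  · have : (ℓ : ℤ) * (content (rp, cp, mp) - content (rq, cq, mq)) ≤ -ℓ := by nlinarith
    omega

lemma eq_of_res_eq_of_fst_eq {p q : Node} (hp : InCols h ℓ p) (hq : InCols h ℓ q)
    (hres : res e κ p = res e κ q) (hrow : p.1 = q.1) : p = q := by
  have hsep := content_sep_of_res_eq hadm hhe hp.2.2 hq.2.2 hres
  obtain ⟨rp, cp, mp⟩ := p
  obtain ⟨rq, cq, mq⟩ := q
  obtain ⟨hp1, hph, -⟩ := hp
  obtain ⟨hq1, hqh, -⟩ := hq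
  simp only [content] at hsep
  dsimp only at *
  subst hrow
  rcases hsep with ⟨hD, rfl⟩ | hD | hD
  · rw [show cp = cq by omega]
  all_goals omega

end Residue

section Counting

open Finset

variable {e h ℓ : ℕ} {κ : ℕ → ZMod e} (lam : MultiPartition ℓ) {x : ZMod e} {r₀ : ℕ}

lemma colLast_pred_of_not_addD_colNext (hr₀ : 0 < r₀)
    (hrow : ∀ n ∈ diag lam, res e κ n = x → n.1 ≠ r₀) {b : ℕ} (hb : b < h * ℓ)
    (hres : res e κ (colNext lam h b) = x) (hr : r₀ < (colNext lam h b).1)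
    (hnA : ¬ AddD h ℓ (diag lam) (colNext lam h b)) :
    0 < b ∧ (res e κ (colLast lam h (b - 1)) = x ∧ r₀ < (colLast lam h (b - 1)).1) ∧
      ¬ RemD ℓ (diag lam) (colLast lam h (b - 1)) := by
  have hh : 0 < h := Nat.pos_of_mul_pos_right (by omega : 0 < h * ℓ)
  rw [addD_colNext_iff lam hb, not_or, not_lt] at hnA
  simp only [colNext] at hr
  have hdm := Nat.div_add_mod b h
  have hmod_lt := Nat.mod_lt b hh
  set q := b / h
  set c := b % h
  have hb' : b - 1 = h * q + (c - 1) := by omega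
  obtain ⟨hdiv, hmod⟩ := div_mod_eq_of_eq_mul_add hh (by omega) hb'
  have hcol : colLen lam q (c + 1) = colLen lam q c :=
    (colLen_antitone lam (by omega) (Nat.le_succ c) q).antisymm hnA.2
  have hlast : colLast lam h (b - 1) = (colLen lam q (c + 1), c, q) := by
    simp only [colLast, hdiv, hmod, Nat.sub_add_cancel (by omega : 1 ≤ c), hcol]
  have hres' : res e κ (colLen lam q (c + 1), c, q) = x := by
    rw [← res_succ_succ]
    exact hres
  refine ⟨by omega, ⟨(congrArg (res e κ) hlast).trans hres', ?_⟩, ?_⟩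
  · rw [hlast]
    refine lt_of_le_of_ne (by omega) fun heq => hrow _ ?_ hres' heq.symm
    rw [← Nat.sub_add_cancel (by omega : 1 ≤ colLen lam q (c + 1)), mem_diag_succ_iff]
    omega
  · rw [remD_colLast_iff lam (by omega), hdiv, hmod, Nat.sub_add_cancel (by omega : 1 ≤ c),
      show c - 1 + 2 = c + 1 by omega]
    omega

lemma colNext_succ_of_not_remD_colLast (hcols : HCols h lam) {b : ℕ} (hb : b < h * ℓ)
    (hres : res e κ (colLast lam h b) = x) (hr : r₀ < (colLast lam h b).1)
    (hnR : ¬ RemD ℓ (diag lam) (colLast lam h b)) :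
    b + 1 < h * ℓ ∧ (res e κ (colNext lam h (b + 1)) = x ∧ r₀ < (colNext lam h (b + 1)).1) ∧
      ¬ AddD h ℓ (diag lam) (colNext lam h (b + 1)) := by
  have hh : 0 < h := Nat.pos_of_mul_pos_right (by omega : 0 < h * ℓ)
  simp only [colLast] at hr
  rw [remD_colLast_iff lam hb, not_and, not_lt] at hnR
  have hdm := Nat.div_add_mod b h
  have hq := Nat.div_lt_of_lt_mul hb
  set q := b / h
  set c := b % h
  have hcol : colLen lam q (c + 2) = colLen lam q (c + 1) :=
    (colLen_antitone lam (by omega) (Nat.le_succ _) q).antisymm (hnR (by omega))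
  have hch : c + 1 < h := by
    by_contra!
    have := colLen_eq_zero_of_lt lam hcols (c := c + 2) (by omega) q
    omega
  have hb' : b + 1 = h * q + (c + 1) := by omega
  obtain ⟨hdiv, hmod⟩ := div_mod_eq_of_eq_mul_add hh hch hb'
  have hnext : colNext lam h (b + 1) = (colLen lam q (c + 1) + 1, c + 2, q) := by
    simp only [colNext, hdiv, hmod, hcol]
  refine ⟨hb' ▸ mul_add_lt_mul_of_lt hch hq, ⟨?_, ?_⟩, ?_⟩
  · rw [hnext, res_succ_succ]
    exact hres
  · rw [hnext]
    omega
  · rw [addD_colNext_iff lam (hb' ▸ mul_add_lt_mul_of_lt hch hq), hdiv, hmod, hcol]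
    omega

lemma ncard_setOf_eq_card_filter {α β : Type*} {f : α → β} (hf : Function.Injective f)
    (s : Finset α) (P : β → Prop) [DecidablePred P] (hP : ∀ y, P y → ∃ a ∈ s, f a = y) :
    {y | P y}.ncard = #{a ∈ s | P (f a)} := by
  have hset : {y | P y} = f '' ↑{a ∈ s | P (f a)} := by
    ext y
    simp only [Set.mem_ofPred_eq, coe_filter, Set.mem_image]
    exact ⟨fun hy => (hP y hy).imp fun a (ha : a ∈ s ∧ f a = y) => ⟨⟨ha.1, ha.2 ▸ hy⟩, ha.2⟩,
      fun ⟨a, ha, hay⟩ => hay ▸ ha.2⟩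
  rw [hset, Set.ncard_image_of_injective _ hf, Set.ncard_coe_finset]

open Classical in
lemma card_colNext_not_addD_eq (hcols : HCols h lam) (hr₀ : 0 < r₀)
    (hrow : ∀ n ∈ diag lam, res e κ n = x → n.1 ≠ r₀) :
    #{b ∈ range (h * ℓ) | (res e κ (colNext lam h b) = x ∧ r₀ < (colNext lam h b).1) ∧
        ¬ AddD h ℓ (diag lam) (colNext lam h b)} =
      #{b ∈ range (h * ℓ) | (res e κ (colLast lam h b) = x ∧ r₀ < (colLast lam h b).1) ∧
        ¬ RemD ℓ (diag lam) (colLast lam h b)} := by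
  refine card_bij' (fun b _ => b - 1) (fun b _ => b + 1) ?_ ?_ ?_ ?_
  · intro b hb
    simp only [mem_filter, mem_range] at hb ⊢
    obtain ⟨-, hB, hnR⟩ :=
      colLast_pred_of_not_addD_colNext lam hr₀ hrow hb.1 hb.2.1.1 hb.2.1.2 hb.2.2
    exact ⟨by omega, hB, hnR⟩
  · intro b hb
    simp only [mem_filter, mem_range] at hb ⊢
    exact colNext_succ_of_not_remD_colLast lam hcols hb.1 hb.2.1.1 hb.2.1.2 hb.2.2
  · intro b hb
    simp only [mem_filter, mem_range] at hb
    have := (colLast_pred_of_not_addD_colNext lam hr₀ hrow hb.1 hb.2.1.1 hb.2.1.2 hb.2.2).1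
    omega
  · intro b _
    simp

theorem sum_colNext_sub_colLast (hcols : HCols h lam) (hr₀ : 0 < r₀)
    (hrow : ∀ n ∈ diag lam, res e κ n = x → n.1 ≠ r₀) :
    ∑ b ∈ range (h * ℓ),
        ((if res e κ (colNext lam h b) = x ∧ r₀ < (colNext lam h b).1 then 1 else 0 : ℤ) -
          (if res e κ (colLast lam h b) = x ∧ r₀ < (colLast lam h b).1 then 1 else 0)) =
      ({A | AddD h ℓ (diag lam) A ∧ res e κ A = x ∧ r₀ < A.1}.ncard : ℤ) -
        ({R | RemD ℓ (diag lam) R ∧ res e κ R = x ∧ r₀ < R.1}.ncard : ℤ) := by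
  classical
  have hshift := card_colNext_not_addD_eq lam hcols hr₀ hrow
  have hsplitT := card_filter_add_card_filter_not
    (s := {b ∈ range (h * ℓ) | res e κ (colNext lam h b) = x ∧ r₀ < (colNext lam h b).1})
    fun b => AddD h ℓ (diag lam) (colNext lam h b)
  have hsplitB := card_filter_add_card_filter_not
    (s := {b ∈ range (h * ℓ) | res e κ (colLast lam h b) = x ∧ r₀ < (colLast lam h b).1})
    fun b => RemD ℓ (diag lam) (colLast lam h b)
  rw [filter_filter, filter_filter] at hsplitT hsplitB
  rw [sum_sub_distrib, sum_boole, sum_boole,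
    ncard_setOf_eq_card_filter (colNext_injective lam) (range (h * ℓ)) _
      fun A hA => by simpa only [mem_range] using exists_colNext_eq_of_addD lam hA.1,
    ncard_setOf_eq_card_filter (colLast_injective lam) (range (h * ℓ)) _
      fun R hR => by simpa only [mem_range] using exists_colLast_eq_of_remD lam hcols hR.1,
    filter_congr fun _ _ => and_comm (a := AddD h ℓ (diag lam) _),
    filter_congr fun _ _ => and_comm (a := RemD ℓ (diag lam) _)]
  omega

end Counting

section Walls

open Finset

variable {e h : ℕ} {κ : ℕ → ZMod e}

lemma pairV_swap (x : ℕ → ℝ) (i j : ℕ) : pairV e h κ x j i = -pairV e h κ x i j := by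
  simp only [pairV]; ring

lemma dval_swap (x y : ℕ → ℝ) (i j : ℕ) (r : ℤ) :
    dval e h κ x y j i (-r) = dval e h κ x y i j r := by
  have hmul : ∀ A B : ℝ, (-A - ((-r : ℤ) : ℝ) * e) * (-B - ((-r : ℤ) : ℝ) * e) =
      (A - r * e) * (B - r * e) := fun A B => by push_cast; ring
  have hwall : ∀ A : ℝ, -A = ((-r : ℤ) : ℝ) * e ↔ A = r * e := fun A => by
    push_cast; constructor <;> intro H <;> linarith
  simp only [dval, OnWall, InLt, InGt, pairV_swap x i j, pairV_swap y i j,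
    pairV_swap (fun _ => 0) i j, hmul, hwall]
  congr

lemma finsum_dval_swap (x y : ℕ → ℝ) (i j : ℕ) :
    ∑ᶠ r, dval e h κ x y j i r = ∑ᶠ r, dval e h κ x y i j r := by
  rw [← finsum_comp_equiv (Equiv.neg ℤ)]
  exact finsum_congr fun r => dval_swap x y i j r

lemma dval_eq_of_pairV_eq {x y : ℕ → ℝ} {i j : ℕ} {V P s : ℤ} (hx : pairV e h κ x i j = V)
    (hy : pairV e h κ y i j = (V + s : ℤ)) (hP : pairV e h κ (fun _ => 0) i j = P) (r : ℤ) :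
    dval e h κ x y i j r =
      (if r * e = V ∧ 0 < s * (P - V) then 1 else 0) -
        (if r * e = V + s ∧ 0 < s * (P - V - s) then 1 else 0) := by
  have hwall : ∀ W : ℤ, (W : ℝ) = (r : ℝ) * e ↔ r * e = W := fun W => by
    constructor <;> intro H <;> exact_mod_cast H.symm
  have hprod : ∀ A B : ℤ, ((A : ℝ) - r * e) * ((B : ℝ) - r * e) = ((A - r * e) * (B - r * e) : ℤ) :=
    fun A B => by push_cast; ring
  have hA : (r * e = V ∧ 0 < (V + s - r * e) * (P - r * e)) ↔ (r * e = V ∧ 0 < s * (P - V)) :=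
    and_congr_right fun hV => by
      rw [show (V + s - r * e) * (P - r * e) = s * (P - V) by rw [hV]; ring]
  have hB : ((V - r * e) * (P - r * e) < 0 ∧ r * e = V + s) ↔
      (r * e = V + s ∧ 0 < s * (P - V - s)) := by
    rw [and_comm]
    refine and_congr_right fun hW => ?_
    rw [show (V - r * e) * (P - r * e) = -(s * (P - V - s)) by rw [hW]; ring, neg_lt_zero]
  simp only [dval, OnWall, InLt, InGt, hx, hy, hP, hwall, hprod, Int.cast_pos, Int.cast_lt_zero,
    hA, hB]
  split_ifs with h₁ h₂ h₂
  · have hs : s = 0 := by omega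
    simp [hs] at h₁
  all_goals norm_num

lemma finsum_ite_mul_eq {d : ℤ} (hd : d ≠ 0) (W : ℤ) (c : Prop) [Decidable c] :
    (∑ᶠ r : ℤ, if r * d = W ∧ c then (1 : ℤ) else 0) = if d ∣ W ∧ c then 1 else 0 := by
  rw [finsum_eq_single _ (W / d)
    (fun r hr => if_neg fun h => hr (by rw [← h.1, Int.mul_ediv_cancel _ hd]))]
  by_cases hW : d ∣ W
  · simp [Int.ediv_mul_cancel hW, hW]
  · simp only [hW, false_and, if_false, ite_eq_right_iff, one_ne_zero, imp_false, not_and]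
    exact fun h => absurd ⟨W / d, by rw [mul_comm, h]⟩ hW

lemma hasFiniteSupport_ite_mul_eq {d : ℤ} (hd : d ≠ 0) (W : ℤ) (c : Prop) [Decidable c] :
    Function.HasFiniteSupport fun r : ℤ => if r * d = W ∧ c then (1 : ℤ) else 0 := by
  refine Set.Subsingleton.finite fun r₁ h₁ r₂ h₂ => ?_
  simp only [Function.mem_support, ne_eq, ite_eq_right_iff, one_ne_zero, imp_false,
    not_not] at h₁ h₂
  exact mul_right_cancel₀ hd (h₁.1.trans h₂.1.symm)

lemma finsum_dval_eq [NeZero e] {x y : ℕ → ℝ} {i j : ℕ} {V P s : ℤ}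
    (hx : pairV e h κ x i j = V) (hy : pairV e h κ y i j = (V + s : ℤ))
    (hP : pairV e h κ (fun _ => 0) i j = P) :
    ∑ᶠ r, dval e h κ x y i j r =
      (if (e : ℤ) ∣ V ∧ 0 < s * (P - V) then 1 else 0) -
        (if (e : ℤ) ∣ V + s ∧ 0 < s * (P - V - s) then 1 else 0) := by
  have he : (e : ℤ) ≠ 0 := by exact_mod_cast NeZero.ne e
  simp_rw [dval_eq_of_pairV_eq hx hy hP]
  rw [finsum_sub_distrib (hasFiniteSupport_ite_mul_eq he _ _) (hasFiniteSupport_ite_mul_eq he _ _),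
    finsum_ite_mul_eq he, finsum_ite_mul_eq he]

lemma sum_sum_ite_lt_eq {M : Type*} [AddCommMonoid M] {N a : ℕ} (ha : a < N) (F : ℕ → ℕ → M)
    (hsymm : ∀ i j, F j i = F i j) (hzero : ∀ i j, (i = a ↔ j = a) → F i j = 0) :
    ∑ i ∈ range N, ∑ j ∈ range N, (if i < j then F i j else 0) = ∑ b ∈ range N, F a b := by
  have hsplit : ∀ i j, (if i < j then F i j else 0) =
      (if i = a then (if a < j then F a j else 0) else 0) +
        (if j = a then (if i < a then F a i else 0) else 0) := by
    intro i j
    by_cases hi : i = a <;> by_cases hj : j = a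
    · subst hi hj; simp
    · subst hi; simp [hj]
    · subst hj; rw [hsymm]; simp [hi]
    · simp [hi, hj, hzero i j (by tauto)]
  have haa : F a a = 0 := hzero a a Iff.rfl
  have hmem : a ∈ range N := mem_range.2 ha
  rw [sum_congr rfl fun i _ => sum_congr rfl fun j _ => hsplit i j]
  simp only [sum_add_distrib, sum_ite_irrel, sum_const_zero, sum_ite_eq', hmem, if_true]
  rw [← sum_add_distrib]
  refine sum_congr rfl fun b _ => ?_
  rcases lt_trichotomy a b with hab | rfl | hab
  · simp [hab, hab.not_gt]
  · simp [haa]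
  · simp [hab, hab.not_gt]

theorem stepDeg_add_single [NeZero e] {ℓ : ℕ} (L : ℕ → ℤ) {a : ℕ} (ha : a < h * ℓ) :
    stepDeg e h ℓ κ (fun b => (L b : ℝ)) (fun b => (L b : ℝ) + if b = a then 1 else 0) =
      ∑ b ∈ range (h * ℓ),
        ((if (e : ℤ) ∣ (L a + rhoZ e h κ a) - (L b + rhoZ e h κ b) ∧ L a < L b then 1 else 0) -
          (if (e : ℤ) ∣ (L a + rhoZ e h κ a) - (L b + rhoZ e h κ b) + 1 ∧ L a + 1 < L b
            then 1 else 0)) := by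
  set z : ℕ → ℤ := fun b => L b + rhoZ e h κ b
  have hx : ∀ i j, pairV e h κ (fun b => (L b : ℝ)) i j = (z i - z j : ℤ) := fun i j => by
    simp only [pairV, z]; push_cast; ring
  have hy : ∀ i j, pairV e h κ (fun b => (L b : ℝ) + if b = a then 1 else 0) i j =
      (z i - z j + ((if i = a then 1 else 0) - (if j = a then 1 else 0)) : ℤ) := fun i j => by
    simp only [pairV, z]; push_cast; ring
  have hP : ∀ i j, pairV e h κ (fun _ => 0) i j = (rhoZ e h κ i - rhoZ e h κ j : ℤ) :=
    fun i j => by simp only [pairV]; push_cast; ring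
  have hzero : ∀ i j, (i = a ↔ j = a) →
      ∑ᶠ r, dval e h κ (fun b => (L b : ℝ)) (fun b => (L b : ℝ) + if b = a then 1 else 0) i j r
        = 0 := by
    intro i j hij
    rw [finsum_dval_eq (hx i j) (hy i j) (hP i j)]
    by_cases hi : i = a <;> simp [hi, hij.not.1, hij.1]
  unfold stepDeg
  rw [sum_sum_ite_lt_eq ha _ (fun i j => finsum_dval_swap _ _ i j) hzero]
  refine sum_congr rfl fun b _ => ?_
  by_cases hb : b = a
  · subst hb
    rw [hzero b b Iff.rfl]
    simp
  · have hPV : rhoZ e h κ a - rhoZ e h κ b - (z a - z b) = L b - L a := by simp only [z]; ring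
    rw [finsum_dval_eq (hx a b) (hy a b) (hP a b)]
    simp only [if_true, hb, if_false, sub_zero, one_mul, hPV, sub_pos, sub_sub, z]

end Walls

section Points

open Finset

variable {e h ℓ : ℕ} {κ : ℕ → ZMod e}

lemma ptv_of_diag_eq_union (hh : 0 < h) {lam μ : MultiPartition ℓ} {r c m : ℕ} (hc : 1 ≤ c)
    (hch : c ≤ h) (hnot : ((r, c, m) : Node) ∉ diag lam)
    (hμ : diag μ = diag lam ∪ {((r, c, m) : Node)}) :
    ptv h μ = fun b => ptv h lam b + if b = h * m + (c - 1) then 1 else 0 := by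
  funext b
  have hindex : b / h = m ∧ b % h + 1 = c ↔ b = h * m + (c - 1) := by
    constructor
    · rintro ⟨rfl, rfl⟩
      exact (Nat.div_add_mod b h).symm
    · intro hb
      have := div_mod_eq_of_eq_mul_add hh (by omega) hb
      omega
  simp only [ptv, (colLen_of_diag_eq_union hc hnot hμ).2 _ _ (Nat.le_add_left 1 _), hindex]
  push_cast
  rfl

theorem stepDeg_ptv_add_single [NeZero e] (lam : MultiPartition ℓ) {a : ℕ} (ha : a < h * ℓ) :
    stepDeg e h ℓ κ (ptv h lam) (fun b => ptv h lam b + if b = a then 1 else 0) =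
      ∑ b ∈ range (h * ℓ),
        ((if res e κ (colNext lam h b) = res e κ (colNext lam h a) ∧
            (colNext lam h a).1 < (colNext lam h b).1 then 1 else 0 : ℤ) -
          (if res e κ (colLast lam h b) = res e κ (colNext lam h a) ∧
            (colNext lam h a).1 < (colLast lam h b).1 then 1 else 0)) := by
  set L : ℕ → ℕ := fun b => colLen lam (b / h) (b % h + 1) with hL
  have hpt : ptv h lam = fun b => ((L b : ℤ) : ℝ) := by
    funext b; simp [ptv, L]
  have hdvd : ∀ b (k : ℤ), (e : ℤ) ∣ ((L a : ℤ) + rhoZ e h κ a) - ((L b : ℤ) + rhoZ e h κ b) + k ↔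
      res e κ (colNext lam h b) + k = res e κ (colNext lam h a) := fun b k => by
    rw [← ZMod.intCast_zmod_eq_zero_iff_dvd, Int.cast_add, Int.cast_sub, intCast_add_rhoZ,
      intCast_add_rhoZ]
    simp only [colNext, L]
    constructor <;> intro H <;> linear_combination H
  rw [hpt, stepDeg_add_single _ ha]
  refine sum_congr rfl fun b _ => ?_
  have hdvd0 := hdvd b 0
  have hlast : res e κ (colLast lam h b) = res e κ (colNext lam h b) + 1 := by
    simp only [colLast, colNext, res_succ_row, sub_add_cancel]
  have hrow : ((L a : ℤ) < L b ↔ (colNext lam h a).1 < (colNext lam h b).1) ∧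
      ((L a : ℤ) + 1 < L b ↔ (colNext lam h a).1 < (colLast lam h b).1) := by
    simp only [colNext, colLast, hL]
    omega
  simp only [add_zero, Int.cast_zero] at hdvd0
  simp only [hdvd0, hdvd b 1, hlast, hrow, Int.cast_one]

end Points

theorem statement_9_general (h ℓ e : ℕ) (κ : ℕ → ZMod e)
    (hh : 1 ≤ h) (hl : 1 ≤ ℓ) (he : h * ℓ < e)
    (hadm : HAdmissible e h ℓ κ)
    (lam μ : MultiPartition ℓ) (hc : HCols h lam)
    (x : ZMod e) (Y : Node)
    (hY : AddD h ℓ (diag lam) Y) (hYres : res e κ Y = x)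
    (hμ : diag μ = diag lam ∪ {Y}) :
    stepDeg e h ℓ κ (ptv h lam) (ptv h μ) =
      (Set.ncard {A : Node | AddD h ℓ (diag lam) A ∧ res e κ A = x ∧ NodeDom ℓ Y A} : ℤ) -
        (Set.ncard {R : Node | RemD ℓ (diag lam) R ∧ res e κ R = x ∧ NodeDom ℓ Y R} : ℤ) := by
  obtain ⟨r, c, m⟩ := Y
  obtain ⟨hc1, hch, hm, hr, -⟩ := (addD_iff lam r c m).1 hY
  have hhe : h ≤ e := (Nat.le_mul_of_pos_right h hl).trans he.le
  have : NeZero e := ⟨by omega⟩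
  obtain ⟨hdiv, hmod⟩ := div_mod_eq_of_eq_mul_add (b := h * m + (c - 1)) hh (by omega) rfl
  have hYnext : colNext lam h (h * m + (c - 1)) = (r, c, m) := by
    simp only [colNext, hdiv, hmod, Nat.sub_add_cancel hc1, hr]
  have hdom : ∀ n, InCols h ℓ n → res e κ n = x → (NodeDom ℓ (r, c, m) n ↔ r < n.1) :=
    fun n hn hres => nodeDom_iff_of_res_eq hadm hhe ⟨hc1, hch, hm⟩ hn (hYres.trans hres.symm)
  have hrow : ∀ n ∈ diag lam, res e κ n = x → n.1 ≠ r := fun n hn hres hnr =>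
    hY.2.2.1 (eq_of_res_eq_of_fst_eq hadm hhe (inCols_of_mem_diag hc hn) ⟨hc1, hch, hm⟩
      (hres.trans hYres.symm) hnr ▸ hn)
  rw [ptv_of_diag_eq_union hh hc1 hch hY.2.2.1 hμ,
    stepDeg_ptv_add_single lam (mul_add_lt_mul_of_lt (by omega) hm), hYnext, hYres,
    sum_colNext_sub_colLast lam hc (by omega) hrow]
  congr 3 <;> ext n <;> simp only [Set.mem_ofPred_eq] <;>
    refine and_congr_right fun hn => and_congr_right fun hres => (hdom n ?_ hres).symm
  exacts [inCols_of_addD hn, inCols_of_mem_diag hc hn.1]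

theorem statement_9 (h ℓ e : ℕ) (κ : ℕ → ZMod e)
    (hh : 1 ≤ h) (hl : 1 ≤ ℓ) (he : h * ℓ < e)
    (hadm : HAdmissible e h ℓ κ) (hnorm : Normalized e h ℓ κ)
    (lam μ : MultiPartition ℓ) (hc : HCols h lam) (hcμ : HCols h μ)
    (x : ZMod e) (Y : Node)
    (hY : AddD h ℓ (diag lam) Y) (hYres : res e κ Y = x)
    (hμ : diag μ = diag lam ∪ {Y}) :
    stepDeg e h ℓ κ (ptv h lam) (ptv h μ) =
      (Set.ncard {A : Node | AddD h ℓ (diag lam) A ∧ res e κ A = x ∧ NodeDom ℓ Y A} : ℤ) -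
        (Set.ncard {R : Node | RemD ℓ (diag lam) R ∧ res e κ R = x ∧ NodeDom ℓ Y R} : ℤ) :=
  statement_9_general h ℓ e κ hh hl he hadm lam μ hc x Y hY hYres hμ

end BC
end

section
/- Assume κ is h-admissible and normalized. Let (r,c,m) and (r',c',m') be triples of integers with r, r' ≥ 1, 1 ≤ c, c' ≤ h and 1 ≤ m, m' ≤ ℓ. If κ_m + c − r = κ_{m'} + c' − r' in ℤ/eℤ and |(m + ℓ(r−c)) − (m' + ℓ(r'−c'))| ≤ hℓ, then m = m' and r − c = r' − c'. In other words, an interval of length hℓ on the real line meets at most one diagonal of boxes of any fixed residue. -/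
namespace BC

/-- Auxiliary lemma: for a normalized `h`-admissible multicharge, no two components
`a < b < ℓ` can satisfy `κ a = κ b + h` in `ℤ/eℤ`. -/
lemma aux_no_gap_h (e h ℓ : ℕ) (κ : ℕ → ZMod e) (hh : 1 ≤ h) (hhe : h < e)
    (hadm : HAdmissible e h ℓ κ) (hnorm : Normalized e h ℓ κ)
    (a b : ℕ) (hab : a < b) (hb : b < ℓ)
    (heq : κ a = κ b + (h : ZMod e)) : False := by
  haveI : NeZero e := ⟨by omega⟩
  have hva : (κ a).val < e := ZMod.val_lt _
  have hvb : (κ b).val < e := ZMod.val_lt _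
  have hv0 : (κ 0).val < e := ZMod.val_lt _
  have hvl : (κ (ℓ - 1)).val < e := ZMod.val_lt _
  have hord : (κ a).val < (κ b).val := hnorm.1 a b hab hb
  -- turn the ZMod equation into a divisibility statement
  have hc : (((κ a).val : ℕ) : ZMod e) = (((κ b).val + h : ℕ) : ZMod e) := by
    push_cast [ZMod.natCast_val, ZMod.cast_id]
    exact heq
  have hmod : (κ a).val ≡ (κ b).val + h [MOD e] := (ZMod.natCast_eq_natCast_iff _ _ _).mp hc
  have hdvd : (e : ℤ) ∣ (((κ b).val + h : ℕ) : ℤ) - ((κ a).val : ℤ) :=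
    (Nat.modEq_iff_dvd).mp hmod
  obtain ⟨k, hk⟩ := hdvd
  have hk1 : k = 1 := by
    have hpos : 0 < (e : ℤ) * k := by rw [← hk]; push_cast; omega
    have hlt : (e : ℤ) * k < 2 * e := by rw [← hk]; push_cast; omega
    by_contra hk1
    rcases lt_trichotomy k 1 with hkl | hke | hkg
    · have hk0 : k ≤ 0 := by omega
      have : (e : ℤ) * k ≤ 0 :=
        mul_nonpos_iff.mpr (Or.inl ⟨by positivity, hk0⟩)
      omega
    · exact hk1 hke
    · have : (e : ℤ) * 2 ≤ (e : ℤ) * k := by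
        apply mul_le_mul_of_nonneg_left (by omega) (by positivity)
      omega
  rw [hk1, mul_one] at hk
  -- key equation: val(κ a) + e = val(κ b) + h
  have hkey : (κ a).val + e = (κ b).val + h := by push_cast at hk; omega
  have hl2 : 2 ≤ ℓ := by omega
  have h0a : (κ 0).val ≤ (κ a).val := by
    rcases Nat.eq_zero_or_pos a with h0 | h0
    · rw [h0]
    · exact le_of_lt (hnorm.1 0 a h0 (by omega))
  have hbl : (κ b).val ≤ (κ (ℓ - 1)).val := by
    rcases eq_or_lt_of_le (Nat.lt_succ_iff.mp (by omega : b < (ℓ - 1) + 1)) with h0 | h0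
    · rw [h0]
    · exact le_of_lt (hnorm.1 b (ℓ - 1) h0 (by omega))
  set d0 : ℕ := (κ 0).val + e - (κ (ℓ - 1)).val with hd0
  have hd0pos : 1 ≤ d0 := by omega
  have hd0le : d0 ≤ h := by omega
  have hsum : (κ 0).val + e = (κ (ℓ - 1)).val + d0 := by omega
  have h0l : κ 0 = κ (ℓ - 1) + (d0 : ZMod e) := by
    have h' : (((κ 0).val + e : ℕ) : ZMod e) = (((κ (ℓ - 1)).val + d0 : ℕ) : ZMod e) := by
      rw [hsum]
    push_cast [ZMod.natCast_val, ZMod.cast_id, ZMod.natCast_self] at h'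
    linear_combination h'
  rcases lt_or_eq_of_le hd0le with hlt | heqh
  · have := hadm (κ (ℓ - 1)) 0 (ℓ - 1) (by omega) (by omega)
      ⟨d0, hlt, h0l⟩ ⟨0, by omega, by simp⟩
    omega
  · exact hnorm.2 (by rw [h0l, heqh])

theorem statement_10 (h ℓ e : ℕ) (κ : ℕ → ZMod e)
    (hh : 1 ≤ h) (hl : 1 ≤ ℓ) (he : h * ℓ < e)
    (hadm : HAdmissible e h ℓ κ) (hnorm : Normalized e h ℓ κ)
    (r c m r' c' m' : ℕ)
    (hr : 1 ≤ r) (hr' : 1 ≤ r')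
    (hc1 : 1 ≤ c) (hch : c ≤ h) (hc1' : 1 ≤ c') (hch' : c' ≤ h)
    (hm1 : 1 ≤ m) (hmℓ : m ≤ ℓ) (hm1' : 1 ≤ m') (hmℓ' : m' ≤ ℓ)
    (hres : κ (m - 1) + (c : ZMod e) - (r : ZMod e) =
      κ (m' - 1) + (c' : ZMod e) - (r' : ZMod e))
    (hdist : |(((m : ℤ) + (ℓ : ℤ) * ((r : ℤ) - (c : ℤ))) -
        ((m' : ℤ) + (ℓ : ℤ) * ((r' : ℤ) - (c' : ℤ))))| ≤ (h : ℤ) * (ℓ : ℤ)) :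
    m = m' ∧ (r : ℤ) - (c : ℤ) = (r' : ℤ) - (c' : ℤ) := by
  have h0e : 0 < e := lt_of_le_of_lt (Nat.zero_le _) he
  haveI : NeZero e := ⟨h0e.ne'⟩
  have hhe : h < e := lt_of_le_of_lt (by simpa using Nat.mul_le_mul_left h hl) he
  set δ : ℤ := ((r : ℤ) - (c : ℤ)) - ((r' : ℤ) - (c' : ℤ)) with hδdef
  have hδe : κ (m - 1) = κ (m' - 1) + ((δ : ℤ) : ZMod e) := by
    rw [hδdef]
    push_cast
    linear_combination hres
  have habs := abs_le.mp hdist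
  have hub := habs.2
  have hlb := habs.1
  -- bound |δ| ≤ h
  have hδle : δ ≤ h := by
    by_contra h'
    push_neg at h'
    have h'' : (h : ℤ) + 1 ≤ δ := by omega
    have : (ℓ : ℤ) * ((h : ℤ) + 1) ≤ (ℓ : ℤ) * δ :=
      mul_le_mul_of_nonneg_left h'' (by positivity)
    nlinarith
  have hδge : -(h : ℤ) ≤ δ := by
    by_contra h'
    push_neg at h'
    have h'' : δ ≤ -((h : ℤ) + 1) := by omega
    have : (ℓ : ℤ) * δ ≤ (ℓ : ℤ) * (-((h : ℤ) + 1)) :=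
      mul_le_mul_of_nonneg_left h'' (by positivity)
    nlinarith
  -- if m = m' then e ∣ δ
  have hsame : m = m' → (e : ℤ) ∣ δ := by
    intro hmm
    rw [hmm] at hδe
    have : ((δ : ℤ) : ZMod e) = 0 := by linear_combination -hδe
    exact (ZMod.intCast_zmod_eq_zero_iff_dvd δ e).mp this
  have hmm : m = m' := by
    by_cases hδh : δ = (h : ℤ)
    · exfalso
      have hmne : m ≠ m' := by
        intro hmm
        have := Int.eq_zero_of_abs_lt_dvd (hsame hmm) (by rw [abs_of_nonneg (by omega)]; omega)
        omega
      have hx : (ℓ : ℤ) * δ = (ℓ : ℤ) * h := by rw [hδh]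
      rw [hδdef] at hx
      have hle : (m : ℤ) ≤ m' := by linarith [hub, hx]
      have hmlt : m < m' := by omega
      refine aux_no_gap_h e h ℓ κ hh hhe hadm hnorm (m - 1) (m' - 1) (by omega) (by omega) ?_
      rw [hδe, hδh]
      push_cast
      ring
    · by_cases hδnh : δ = -(h : ℤ)
      · exfalso
        have hmne : m ≠ m' := by
          intro hmm
          have := Int.eq_zero_of_abs_lt_dvd (hsame hmm)
            (by rw [hδnh, abs_neg, abs_of_nonneg (by omega)]; omega)
          omega
        have hx : (ℓ : ℤ) * δ = (ℓ : ℤ) * (-(h : ℤ)) := by rw [hδnh]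
        rw [hδdef] at hx
        have hle : (m' : ℤ) ≤ m := by linarith [hlb, hx]
        have hmlt : m' < m := by omega
        refine aux_no_gap_h e h ℓ κ hh hhe hadm hnorm (m' - 1) (m - 1) (by omega) (by omega) ?_
        rw [hδe, hδnh]
        push_cast
        ring
      · -- |δ| ≤ h - 1
        rcases le_or_gt 0 δ with hpos | hneg
        · have hd : δ.toNat < h := by omega
          have hcast : ((δ.toNat : ℕ) : ZMod e) = ((δ : ℤ) : ZMod e) := by
            rw [← Int.cast_natCast, Int.toNat_of_nonneg hpos]
          have heq2 : κ (m - 1) = κ (m' - 1) + ((δ.toNat : ℕ) : ZMod e) := by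
            rw [hcast]
            exact hδe
          have := hadm (κ (m' - 1)) (m - 1) (m' - 1) (by omega) (by omega)
            ⟨δ.toNat, hd, heq2⟩ ⟨0, by omega, by simp⟩
          omega
        · have hd : (-δ).toNat < h := by omega
          have hcast : (((-δ).toNat : ℕ) : ZMod e) = ((-δ : ℤ) : ZMod e) := by
            rw [← Int.cast_natCast, Int.toNat_of_nonneg (by omega : (0:ℤ) ≤ -δ)]
          have heq2 : κ (m' - 1) = κ (m - 1) + (((-δ).toNat : ℕ) : ZMod e) := by
            rw [hcast]
            push_cast
            linear_combination -hδe
          have := hadm (κ (m - 1)) (m' - 1) (m - 1) (by omega) (by omega)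
            ⟨(-δ).toNat, hd, heq2⟩ ⟨0, by omega, by simp⟩
          omega
  refine ⟨hmm, ?_⟩
  have hdvd := hsame hmm
  have hδ0 : δ = 0 := Int.eq_zero_of_abs_lt_dvd hdvd (abs_lt.mpr ⟨by omega, by omega⟩)
  omega

end BC
end

section
/- Assume κ is h-admissible and normalized. For every μ ∈ 𝒫^ℓ_n(h), the distinguished path t^μ satisfies t^μ(k) = pt(μ^{(k)}) for all 0 ≤ k ≤ n (in particular t^μ is a dominant path), and deg(t^μ) = 0. -/
/-!
The least dominant removable node of a multipartition is the last node `(K, c, M)` (end of the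
last row) of the component whose last node has the largest θ-position `M + ℓ(K - c)`; these
positions are distinct for distinct components. So `t^μ` deletes such nodes one at a time, and
`t^μ(k) = pt(μ^{(k)})` because deleting `(r, c, m)` lowers exactly the coordinate `h·m + c - 1`
by one. Every `pt(λ)` is dominant since column lengths decrease.

For the degree, the step `pt(μ^{(k-1)}) → pt(μ^{(k)})` adds `ε_s` at the column of the deleted
node `X_k`. Admissibility and normalization give `κ_m + h ≤ κ_t` and `κ_t + h < κ_m + e` for
`m < t`, so `ρ` lies strictly inside the fundamental alcove: `0 < ⟨ρ, α⟩ < e` for `α ∈ Φ⁺`. The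
maximality of the θ-position of `X_k` then bounds the column lengths of the other components
enough to keep `⟨pt(μ^{(k)}) + ρ, α⟩` at least `2` above the wall `r = 0` (if `α = ε_s - ε_j`)
or `2` below the wall `r = 1` (if `α = ε_i - ε_s`), so no step meets a wall from the side that
counts.
-/

namespace BC

namespace MultiPartition

variable {ℓ : ℕ} (μ : MultiPartition ℓ)

theorem row_antitone_s12 (m : ℕ) : Antitone (μ.row m) :=
  antitone_nat_of_succ_le (μ.antitone m)

theorem exists_row_eq_zero : ∃ R, ∀ m r, R ≤ r → μ.row m r = 0 := by
  choose f hf using μ.row_finite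
  refine ⟨(Finset.range ℓ).sup f, fun m r hr => ?_⟩
  rcases Nat.lt_or_ge m ℓ with hm | hm
  · exact hf m r ((Finset.le_sup (Finset.mem_range.2 hm)).trans hr)
  · exact μ.comp_bound m hm r

end MultiPartition

section Diagram

variable {ℓ : ℕ} (μ : MultiPartition ℓ)

theorem size_eq_sum {R : ℕ} (hR : ∀ m r, R ≤ r → μ.row m r = 0) :
    size μ = ∑ m ∈ Finset.range ℓ, ∑ r ∈ Finset.range R, μ.row m r := by
  have hinner : ∀ m, ∑ᶠ r, μ.row m r = ∑ r ∈ Finset.range R, μ.row m r := fun m =>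
    finsum_eq_sum_of_support_subset _ fun r hr => by
      by_contra hrR
      exact hr (hR m r (by simpa using hrR))
  rw [size, finsum_eq_sum_of_support_subset _ (s := Finset.range ℓ)]
  · exact Finset.sum_congr rfl fun m _ => hinner m
  · intro m hm
    by_contra hmℓ
    refine hm ((hinner m).trans (Finset.sum_eq_zero fun r _ => μ.comp_bound m ?_ r))
    simpa using hmℓ

theorem diag_eq_image {R : ℕ} (hR : ∀ m r, R ≤ r → μ.row m r = 0) :
    diag μ = (fun x : (_ : ℕ × ℕ) × ℕ => ((x.1.2 + 1, x.2, x.1.1) : Node)) ''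
      ↑((Finset.range ℓ ×ˢ Finset.range R).sigma fun p => Finset.Icc 1 (μ.row p.1 p.2)) := by
  ext ⟨r, c, m⟩
  simp only [diag, Set.mem_ofPred_eq, Set.mem_image, Finset.coe_sigma, Set.mem_sigma_iff,
    Finset.coe_product, Set.mem_prod, Finset.coe_range, Set.mem_Iio, Finset.coe_Icc,
    Set.mem_Icc, Sigma.exists, Prod.exists, Prod.mk.injEq]
  constructor
  · rintro ⟨hr, hc, hcr⟩
    refine ⟨m, r - 1, c, ⟨⟨?_, ?_⟩, hc, hcr⟩, by omega, rfl, rfl⟩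
    · by_contra hm
      have := μ.comp_bound m (by omega) (r - 1)
      omega
    · by_contra hrR
      have := hR m (r - 1) (by omega)
      omega
  · rintro ⟨m, r, c, ⟨-, hc, hcr⟩, rfl, rfl, rfl⟩
    exact ⟨by omega, hc, by simpa using hcr⟩

theorem diag_finite : (diag μ).Finite := by
  obtain ⟨R, hR⟩ := μ.exists_row_eq_zero
  rw [diag_eq_image μ hR]
  exact Set.Finite.image _ (Finset.finite_toSet _)

theorem ncard_diag : (diag μ).ncard = size μ := by
  obtain ⟨R, hR⟩ := μ.exists_row_eq_zero
  rw [diag_eq_image μ hR, Set.ncard_image_of_injective, Set.ncard_coe_finset,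
    Finset.card_sigma, Finset.sum_product, size_eq_sum μ hR]
  · simp
  · rintro ⟨⟨m, r⟩, c⟩ ⟨⟨m', r'⟩, c'⟩ h
    simp only [Prod.mk.injEq] at h
    obtain ⟨hr, rfl, rfl⟩ := h
    obtain rfl : r = r' := by omega
    rfl

end Diagram

section Columns

variable {ℓ : ℕ} (μ : MultiPartition ℓ)

theorem le_row_iff_lt_colLen (m : ℕ) {i : ℕ} (hi : 1 ≤ i) (r : ℕ) :
    i ≤ μ.row m r ↔ r < colLen μ m i := by
  have hlower : IsLowerSet {r | i ≤ μ.row m r} := fun _ _ hba ha =>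
    ha.trans (μ.row_antitone_s12 m hba)
  obtain ⟨R, hR⟩ := μ.exists_row_eq_zero
  rcases hlower.eq_univ_or_Iio with huniv | ⟨a, ha⟩
  · have : R ∈ {r | i ≤ μ.row m r} := huniv ▸ Set.mem_univ R
    rw [Set.mem_ofPred_eq, hR m R le_rfl] at this
    omega
  · rw [colLen, ha, Set.ncard_Iio_nat, ← Set.mem_Iio, ← ha, Set.mem_ofPred_eq]

theorem colLen_antitone_s12 (m : ℕ) {i i' : ℕ} (hi : 1 ≤ i) (hii' : i ≤ i') :
    colLen μ m i' ≤ colLen μ m i := by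
  by_contra! hlt
  have := (le_row_iff_lt_colLen μ m (hi.trans hii') _).2 hlt
  have := (le_row_iff_lt_colLen μ m hi _).1 (hii'.trans this)
  omega

theorem ptD_diag (h a : ℕ) : ptD h (diag μ) a = colLen μ (a / h) (a % h + 1) := by
  simp [ptD, diag, colLen]

end Columns

/-- The index `h·m + (c - 1)` of the basis vector `ε` attached to the column of `(r, c, m)`. -/
def nodeIndex (h : ℕ) (b : Node) : ℕ := h * b.2.2 + (b.2.1 - 1)

theorem mul_add_div_mod_of_lt {h a : ℕ} (m : ℕ) (ha : a < h) :
    (h * m + a) / h = m ∧ (h * m + a) % h = a := by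
  rw [Nat.mul_add_div (by omega), Nat.div_eq_of_lt ha, Nat.mul_add_mod, Nat.mod_eq_of_lt ha]
  exact ⟨rfl, rfl⟩

theorem mul_add_lt_mul_add_iff {h m m' a b : ℕ} (ha : a < h) (hb : b < h) :
    h * m + a < h * m' + b ↔ m < m' ∨ (m = m' ∧ a < b) := by
  rcases lt_trichotomy m m' with hlt | rfl | hgt
  · have := Nat.mul_le_mul_left h (Nat.succ_le_of_lt hlt)
    simp only [hlt, true_or, iff_true]
    rw [Nat.mul_succ] at this
    omega
  · simp
  · have := Nat.mul_le_mul_left h (Nat.succ_le_of_lt hgt)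
    simp only [hgt.not_gt, hgt.ne', false_and, or_false, iff_false, not_lt]
    rw [Nat.mul_succ] at this
    omega

theorem nodeIndex_div_mod {h : ℕ} {r c m : ℕ} (hc : 1 ≤ c) (hch : c ≤ h) :
    nodeIndex h (r, c, m) / h = m ∧ nodeIndex h (r, c, m) % h + 1 = c := by
  obtain ⟨hdiv, hmod⟩ := mul_add_div_mod_of_lt m (show c - 1 < h by omega)
  exact ⟨hdiv, by rw [nodeIndex, hmod]; omega⟩

section Points

variable {ℓ : ℕ} (μ : MultiPartition ℓ)

theorem ptD_diag_eq_add {h : ℕ} {X : Node} (hX : X ∈ diag μ) (hXh : X.2.1 ≤ h) (a : ℕ) :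
    ptD h (diag μ) a = ptD h (diag μ \ {X}) a + if nodeIndex h X = a then 1 else 0 := by
  obtain ⟨r, c, m⟩ := X
  change c ≤ h at hXh
  obtain ⟨hr, hc, hcr⟩ := hX
  dsimp only at hr hc hcr
  have hfin : {r' | ((r' + 1 : ℕ), a % h + 1, a / h) ∈ diag μ}.Finite :=
    (diag_finite μ).preimage (by intro _ _ _ _ hx; simpa using hx)
  by_cases hidx : nodeIndex h (r, c, m) = a
  · obtain ⟨hdiv, hmod⟩ := nodeIndex_div_mod (r := r) (m := m) hc hXh
    rw [hidx] at hdiv hmod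
    have hset : {r' | ((r' + 1 : ℕ), a % h + 1, a / h) ∈ diag μ \ {(r, c, m)}} =
        {r' | ((r' + 1 : ℕ), a % h + 1, a / h) ∈ diag μ} \ {r - 1} := by
      ext r'
      simp only [Set.mem_sdiff, Set.mem_singleton_iff, Set.mem_ofPred_eq, hdiv, hmod,
        Prod.mk.injEq, and_true]
      constructor <;> rintro ⟨h1, h2⟩ <;> exact ⟨h1, by omega⟩
    have hmem : r - 1 ∈ {r' | ((r' + 1 : ℕ), a % h + 1, a / h) ∈ diag μ} := by
      simp only [Set.mem_ofPred_eq, hdiv, hmod, diag]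
      exact ⟨by omega, hc, by rwa [Nat.add_sub_cancel]⟩
    simp only [ptD, if_pos hidx, hset]
    exact_mod_cast (Set.ncard_sdiff_singleton_add_one hmem hfin).symm
  · have hset : {r' | ((r' + 1 : ℕ), a % h + 1, a / h) ∈ diag μ \ {(r, c, m)}} =
        {r' | ((r' + 1 : ℕ), a % h + 1, a / h) ∈ diag μ} := by
      ext r'
      simp only [Set.mem_sdiff, Set.mem_singleton_iff, Set.mem_ofPred_eq, and_iff_left_iff_imp]
      rintro - hX
      simp only [Prod.mk.injEq] at hX
      apply hidx
      rw [nodeIndex, ← hX.2.2, ← hX.2.1, Nat.add_sub_cancel, Nat.div_add_mod]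
    simp only [ptD, if_neg hidx, hset, add_zero]

end Points

section Pairing

variable (e h : ℕ) (κ : ℕ → ZMod e)

theorem rhoZ_mul_add {a : ℕ} (m : ℕ) (ha : a < h) :
    rhoZ e h κ (h * m + a) = (e : ℤ) - (κ m).val - a := by
  obtain ⟨hdiv, hmod⟩ := mul_add_div_mod_of_lt m ha
  rw [rhoZ, hdiv, hmod]

theorem pairV_zero_mul_add {m m' a b : ℕ} (ha : a < h) (hb : b < h) :
    pairV e h κ (fun _ => 0) (h * m + a) (h * m' + b) =
      ((((κ m').val : ℤ) + b - ((κ m).val + a) : ℤ) : ℝ) := by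
  rw [pairV, rhoZ_mul_add e h κ m ha, rhoZ_mul_add e h κ m' hb]
  push_cast
  ring

theorem pairV_ptD_diag_mul_add {ℓ : ℕ} (μ : MultiPartition ℓ) {m m' a b : ℕ} (ha : a < h)
    (hb : b < h) :
    pairV e h κ (ptD h (diag μ)) (h * m + a) (h * m' + b) =
      (((colLen μ m (a + 1) : ℤ) - colLen μ m' (b + 1) + ((κ m').val + b - ((κ m).val + a)) :
        ℤ) : ℝ) := by
  obtain ⟨hdiv, hmod⟩ := mul_add_div_mod_of_lt m ha
  obtain ⟨hdiv', hmod'⟩ := mul_add_div_mod_of_lt m' hb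
  rw [pairV, ptD_diag, ptD_diag, hdiv, hmod, hdiv', hmod', rhoZ_mul_add e h κ m ha,
    rhoZ_mul_add e h κ m' hb]
  push_cast
  ring

theorem pairV_ptD_diag_pos {ℓ : ℕ} (μ : MultiPartition ℓ) (m : ℕ) {i j : ℕ} (hij : i < j)
    (hj : j < h) : 0 < pairV e h κ (ptD h (diag μ)) (h * m + i) (h * m + j) := by
  rw [pairV_ptD_diag_mul_add e h κ μ (hij.trans hj) hj]
  have := colLen_antitone_s12 μ m (Nat.le_add_left 1 i) (Nat.add_le_add_right hij.le 1)
  exact Int.cast_pos.2 (by omega)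

end Pairing

section LastNode

variable {ℓ : ℕ} (μ : MultiPartition ℓ)

noncomputable def lastNode (m : ℕ) : Node := (colLen μ m 1, μ.row m (colLen μ m 1 - 1), m)

theorem row_colLen_eq_zero (m : ℕ) : μ.row m (colLen μ m 1) = 0 := by
  by_contra h
  exact lt_irrefl _ ((le_row_iff_lt_colLen μ m le_rfl _).1 (Nat.one_le_iff_ne_zero.2 h))

noncomputable def removeLast (M : ℕ) : MultiPartition ℓ where
  row m r := μ.row m r - if m = M ∧ r = colLen μ M 1 - 1 then 1 else 0
  antitone m r := by
    have := μ.antitone m r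
    have hK := row_colLen_eq_zero μ M
    have h0 : colLen μ M 1 = 0 → μ.row M 0 = 0 := fun h0 => h0 ▸ hK
    split_ifs <;> grind
  comp_bound m hm r := by rw [μ.comp_bound m hm r, Nat.zero_sub]
  row_finite m := by
    obtain ⟨R, hR⟩ := μ.row_finite m
    exact ⟨R, fun r hr => by rw [hR r hr, Nat.zero_sub]⟩

theorem diag_removeLast (M : ℕ) : diag (removeLast μ M) = diag μ \ {lastNode μ M} := by
  ext ⟨r, c, m⟩
  have hK := row_colLen_eq_zero μ M
  simp only [diag, removeLast, lastNode, Set.mem_sdiff, Set.mem_ofPred_eq,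
    Set.mem_singleton_iff, Prod.mk.injEq]
  split_ifs with hrm
  · obtain ⟨rfl, hr⟩ := hrm
    have h0 : colLen μ m 1 = 0 → μ.row m 0 = 0 := fun h0 => h0 ▸ hK
    grind
  · grind

end LastNode

theorem thetaPos_lt_thetaPos_iff {ℓ : ℕ} {b b' : Node} (hb : b.2.2 < ℓ) (hb' : b'.2.2 < ℓ) :
    thetaPos ℓ b < thetaPos ℓ b' ↔
      (b.1 : ℤ) - b.2.1 < b'.1 - b'.2.1 ∨
        ((b.1 : ℤ) - b.2.1 = b'.1 - b'.2.1 ∧ b.2.2 < b'.2.2) := by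
  obtain ⟨r, c, m⟩ := b
  obtain ⟨r', c', m'⟩ := b'
  dsimp only [thetaPos] at hb hb' ⊢
  rcases lt_trichotomy ((r : ℤ) - c) (r' - c') with hlt | heq | hgt
  · have : (ℓ : ℤ) * (r - c) + ℓ ≤ ℓ * (r' - c') := by nlinarith
    simp only [hlt, true_or, iff_true]
    omega
  · rw [heq]
    omega
  · have : (ℓ : ℤ) * (r' - c') + ℓ ≤ ℓ * (r - c) := by nlinarith
    simp only [hgt.not_gt, hgt.ne', false_and, or_false, iff_false, not_lt]
    omega

section Removable

variable {ℓ : ℕ} (μ : MultiPartition ℓ)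

theorem lt_of_mem_diag {b : Node} (hb : b ∈ diag μ) : b.2.2 < ℓ := by
  by_contra! hℓ
  have := μ.comp_bound _ hℓ (b.1 - 1)
  have := hb.2
  omega

theorem lastNode_mem {m : ℕ} (hm : 0 < colLen μ m 1) : lastNode μ m ∈ diag μ :=
  ⟨hm, (le_row_iff_lt_colLen μ m le_rfl _).2 (Nat.sub_lt hm one_pos), le_rfl⟩

theorem remD_lastNode {m : ℕ} (hm : 0 < colLen μ m 1) : RemD ℓ (diag μ) (lastNode μ m) :=
  ⟨lastNode_mem μ hm, removeLast μ m, diag_removeLast μ m⟩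

theorem col_eq_row_of_remD {r c m : ℕ} (hX : RemD ℓ (diag μ) (r, c, m)) :
    c = μ.row m (r - 1) := by
  obtain ⟨⟨hr, hc, hcr⟩, ν, hν⟩ := hX
  by_contra hne
  have hnext : ((r, c + 1, m) : Node) ∈ diag ν := by
    rw [hν]
    exact ⟨⟨hr, by simp, by simp only at hcr ⊢; omega⟩, by simp⟩
  have : ((r, c, m) : Node) ∈ diag ν := ⟨hr, hc, by have := hnext.2.2; simp only at this ⊢; omega⟩
  rw [hν] at this
  exact this.2 rfl

theorem thetaPos_lt_lastNode {r c m : ℕ} (hX : RemD ℓ (diag μ) (r, c, m))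
    (hne : (r, c, m) ≠ lastNode μ m) : thetaPos ℓ (r, c, m) < thetaPos ℓ (lastNode μ m) := by
  have hm := lt_of_mem_diag μ hX.1
  have hcr := col_eq_row_of_remD μ hX
  obtain ⟨hr, hc, -⟩ := hX.1
  dsimp only at hr hc hm
  subst hcr
  have hrK : r - 1 < colLen μ m 1 := (le_row_iff_lt_colLen μ m le_rfl _).1 hc
  have hrow := μ.row_antitone_s12 m (show r - 1 ≤ colLen μ m 1 - 1 by omega)
  have hrlt : r < colLen μ m 1 := by
    by_contra
    obtain rfl : r = colLen μ m 1 := by omega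
    exact hne rfl
  simp only [thetaPos, lastNode]
  have : (r : ℤ) - μ.row m (r - 1) < colLen μ m 1 - μ.row m (colLen μ m 1 - 1) := by omega
  have hℓ : (0 : ℤ) < ℓ := by omega
  nlinarith

end Removable

theorem leastRem_eq_of_isLeastRem {ℓ : ℕ} {D : Set Node} {X : Node} (hX : IsLeastRem ℓ D X) :
    leastRem ℓ D = X := by
  have hZ : IsLeastRem ℓ D (leastRem ℓ D) := Classical.epsilon_spec ⟨X, hX⟩
  by_contra hne
  have h1 := hX.2 _ hZ.1 hne
  have h2 := hZ.2 _ hX.1 (Ne.symm hne)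
  unfold NodeDom at h1 h2
  omega

section Rightmost

variable {ℓ : ℕ} (μ : MultiPartition ℓ)

def IsRightmostComp (M : ℕ) : Prop :=
  M < ℓ ∧ 0 < colLen μ M 1 ∧ ∀ t < ℓ, t ≠ M → 0 < colLen μ t 1 →
    thetaPos ℓ (lastNode μ t) < thetaPos ℓ (lastNode μ M)

theorem colLen_pos_of_mem_diag {b : Node} (hb : b ∈ diag μ) : 0 < colLen μ b.2.2 1 := by
  obtain ⟨-, hc, hcr⟩ := hb
  exact (le_row_iff_lt_colLen μ _ le_rfl 0).1
    (hc.trans (hcr.trans (μ.row_antitone_s12 _ (Nat.zero_le _))))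

theorem exists_isRightmostComp (hne : (diag μ).Nonempty) : ∃ M, IsRightmostComp μ M := by
  obtain ⟨b, hb⟩ := hne
  obtain ⟨M, hM, hmax⟩ := Finset.exists_max_image
    ((Finset.range ℓ).filter fun t => 0 < colLen μ t 1) (fun t => thetaPos ℓ (lastNode μ t))
    ⟨b.2.2, by simpa using ⟨lt_of_mem_diag μ hb, colLen_pos_of_mem_diag μ hb⟩⟩
  simp only [Finset.mem_filter, Finset.mem_range] at hM hmax
  refine ⟨M, hM.1, hM.2, fun t ht htM hKt => (hmax t ⟨ht, hKt⟩).lt_of_ne fun heq => htM ?_⟩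
  have h1 := (thetaPos_lt_thetaPos_iff (b := lastNode μ t) (b' := lastNode μ M) ht hM.1).not
  have h2 := (thetaPos_lt_thetaPos_iff (b := lastNode μ M) (b' := lastNode μ t) hM.1 ht).not
  simp only [heq, lt_irrefl, not_false_eq_true, true_iff, not_or, not_and, not_lt] at h1 h2
  simp only [lastNode] at h1 h2
  omega

theorem IsRightmostComp.isLeastRem {M : ℕ} (hM : IsRightmostComp μ M) :
    IsLeastRem ℓ (diag μ) (lastNode μ M) := by
  refine ⟨remD_lastNode μ hM.2.1, fun ⟨r, c, m⟩ hY hne => Or.inl ?_⟩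
  have hm := lt_of_mem_diag μ hY.1
  by_cases hmM : m = M
  · subst hmM
    exact thetaPos_lt_lastNode μ hY hne
  · refine lt_of_le_of_lt ?_ (hM.2.2 m hm hmM (colLen_pos_of_mem_diag μ hY.1))
    by_cases hlast : (r, c, m) = lastNode μ m
    · rw [hlast]
    · exact (thetaPos_lt_lastNode μ hY hlast).le

theorem IsRightmostComp.leastRem_eq {M : ℕ} (hM : IsRightmostComp μ M) :
    leastRem ℓ (diag μ) = lastNode μ M :=
  leastRem_eq_of_isLeastRem hM.isLeastRem

end Rightmost

section Peeling

variable {ℓ h : ℕ}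

theorem HCols.removeLast {μ : MultiPartition ℓ} (hc : HCols h μ) (M : ℕ) :
    HCols h (removeLast μ M) :=
  fun m r => (Nat.sub_le _ _).trans (hc m r)

theorem leastRem_mem {μ : MultiPartition ℓ} (hne : (diag μ).Nonempty) :
    leastRem ℓ (diag μ) ∈ diag μ := by
  obtain ⟨M, hM⟩ := exists_isRightmostComp μ hne
  rw [hM.leastRem_eq]
  exact lastNode_mem μ hM.2.1

theorem exists_diag_eq_sdiff_leastRem {μ : MultiPartition ℓ} (hc : HCols h μ)
    (hne : (diag μ).Nonempty) :
    ∃ ν : MultiPartition ℓ, HCols h ν ∧ diag ν = diag μ \ {leastRem ℓ (diag μ)} ∧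
      size ν + 1 = size μ := by
  obtain ⟨M, hM⟩ := exists_isRightmostComp μ hne
  have hdiag : diag (removeLast μ M) = diag μ \ {leastRem ℓ (diag μ)} := by
    rw [hM.leastRem_eq, diag_removeLast]
  refine ⟨removeLast μ M, hc.removeLast M, hdiag, ?_⟩
  rw [← ncard_diag, ← ncard_diag, hdiag]
  exact Set.ncard_sdiff_singleton_add_one (leastRem_mem hne) (diag_finite μ)

theorem exists_diag_eq_PDiag {μ : MultiPartition ℓ} (hc : HCols h μ) {j : ℕ}
    (hj : j ≤ size μ) :
    ∃ ν : MultiPartition ℓ, HCols h ν ∧ diag ν = PDiag ℓ (diag μ) j ∧ size ν + j = size μ := by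
  induction j with
  | zero => exact ⟨μ, hc, rfl, rfl⟩
  | succ j ih =>
    obtain ⟨ν, hνc, hν, hνsize⟩ := ih (by omega)
    have hne : (diag ν).Nonempty :=
      Set.nonempty_of_ncard_ne_zero (by rw [ncard_diag]; omega)
    obtain ⟨ν', hν'c, hν', hν'size⟩ := exists_diag_eq_sdiff_leastRem hνc hne
    exact ⟨ν', hν'c, by rw [hν', hν]; rfl, by omega⟩

theorem exists_nonempty_diag_eq_PDiag {μ : MultiPartition ℓ} (hc : HCols h μ) {j : ℕ}
    (hj : j < size μ) :
    ∃ ν : MultiPartition ℓ, HCols h ν ∧ diag ν = PDiag ℓ (diag μ) j ∧ (diag ν).Nonempty := by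
  obtain ⟨ν, hνc, hν, hνsize⟩ := exists_diag_eq_PDiag hc hj.le
  exact ⟨ν, hνc, hν, Set.nonempty_of_ncard_ne_zero (by rw [ncard_diag]; omega)⟩

end Peeling

section DistinguishedPath

theorem pts_zero (s : ℕ → ℕ) : pts s 0 = fun _ => 0 := by
  funext a
  simp [pts]

theorem pts_succ (s : ℕ → ℕ) (k a : ℕ) :
    pts s (k + 1) a = pts s k a + if s k = a then 1 else 0 := by
  simp only [pts, Finset.range_add_one, Finset.filter_insert]
  split_ifs
  · rw [Finset.card_insert_of_notMem (by simp), Nat.cast_add_one]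
  · rw [add_zero]

variable {h ℓ n : ℕ} {μ : MultiPartition ℓ}

theorem nodeIndex_lt_of_mem_diag (hc : HCols h μ) {X : Node} (hX : X ∈ diag μ) :
    nodeIndex h X < h * ℓ := by
  have := hc X.2.2 (X.1 - 1)
  have := hX.2
  simpa [nodeIndex] using (mul_add_lt_mul_add_iff (h := h) (b := 0) (show X.2.1 - 1 < h by omega)
    (by omega)).2 (Or.inl (lt_of_mem_diag μ hX))

theorem tPath_of_lt {k : ℕ} (hk : k < n) :
    tPath h ℓ n μ k = nodeIndex h (leastRem ℓ (PDiag ℓ (diag μ) (n - 1 - k))) :=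
  if_pos hk

theorem pts_tPath (hμ : size μ = n) (hc : HCols h μ) {k : ℕ} (hk : k ≤ n) :
    pts (tPath h ℓ n μ) k = ptD h (PDiag ℓ (diag μ) (n - k)) := by
  induction k with
  | zero =>
    obtain ⟨ν, -, hν, hνsize⟩ := exists_diag_eq_PDiag hc (j := n) hμ.ge
    have hempty : diag ν = ∅ :=
      (Set.ncard_eq_zero (diag_finite ν)).1 (by rw [ncard_diag]; omega)
    rw [pts_zero, Nat.sub_zero, ← hν, hempty]
    funext a
    simp [ptD]
  | succ k ih =>
    obtain ⟨ν, hνc, hν, hne⟩ := exists_nonempty_diag_eq_PDiag hc (j := n - 1 - k) (by omega)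
    have hX := leastRem_mem hne
    funext a
    rw [pts_succ, ih (by omega), tPath_of_lt (by omega), show n - k = n - 1 - k + 1 by omega,
      show n - (k + 1) = n - 1 - k by omega, ← hν,
      ptD_diag_eq_add ν hX (hνc _ _ |>.trans' hX.2.2) a, PDiag, hν]

end DistinguishedPath

section Charge

variable {e h ℓ : ℕ} {κ : ℕ → ZMod e}

theorem eq_add_natCast_of_val_add [NeZero e] {a b : ZMod e} {d : ℕ}
    (hd : b.val = a.val + d ∨ b.val + e = a.val + d) : b = a + d := by
  rw [← ZMod.natCast_zmod_val a, ← ZMod.natCast_zmod_val b, ← Nat.cast_add]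
  rcases hd with hd | hd
  · rw [hd]
  · rw [← hd, Nat.cast_add, ZMod.natCast_self, add_zero]

theorem HAdmissible.eq_of_val_add [NeZero e] (hadm : HAdmissible e h ℓ κ) {m t d : ℕ}
    (hm : m < ℓ) (ht : t < ℓ) (hd : d < h)
    (hmt : (κ t).val = (κ m).val + d ∨ (κ t).val + e = (κ m).val + d) : m = t :=
  hadm (κ m) m t hm ht ⟨0, by omega, by simp⟩ ⟨d, hd, eq_add_natCast_of_val_add hmt⟩

theorem val_add_le_val_of_lt [NeZero e] (hadm : HAdmissible e h ℓ κ)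
    (hnorm : Normalized e h ℓ κ) {m t : ℕ} (hmt : m < t) (ht : t < ℓ) :
    (κ m).val + h ≤ (κ t).val := by
  have := hnorm.1 m t hmt ht
  by_contra! hlt
  have := hadm.eq_of_val_add (m := m) (t := t) (d := (κ t).val - (κ m).val) (by omega) ht
    (by omega) (by omega)
  omega

theorem val_add_le_val_add_of_lt [NeZero e] (hadm : HAdmissible e h ℓ κ)
    (hnorm : Normalized e h ℓ κ) {m t : ℕ} (hmt : m < t) (ht : t < ℓ) :
    (κ t).val + h ≤ (κ m).val + e := by
  have := hnorm.1 m t hmt ht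
  have := (κ t).val_lt
  by_contra! hlt
  have := hadm.eq_of_val_add (m := t) (t := m) (d := (κ m).val + e - (κ t).val) ht
    (by omega) (by omega) (by omega)
  omega

theorem val_add_lt_val_add_of_lt [NeZero e] (hh : 1 ≤ h) (hadm : HAdmissible e h ℓ κ)
    (hnorm : Normalized e h ℓ κ) {m t : ℕ} (hmt : m < t) (ht : t < ℓ) :
    (κ t).val + h < (κ m).val + e := by
  have hle := val_add_le_val_add_of_lt hadm hnorm hmt ht
  by_contra hge
  have hm : m = 0 := by
    by_contra hm
    have := val_add_le_val_of_lt hadm hnorm (Nat.pos_of_ne_zero hm) (hmt.trans ht)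
    have := val_add_le_val_add_of_lt hadm hnorm (show 0 < t by omega) ht
    omega
  have ht : t = ℓ - 1 := by
    by_contra ht'
    have := val_add_le_val_of_lt hadm hnorm (show t < ℓ - 1 by omega) (by omega)
    have := val_add_le_val_add_of_lt hadm hnorm (show m < ℓ - 1 by omega) (by omega)
    omega
  subst hm ht
  exact hnorm.2 (eq_add_natCast_of_val_add (Or.inr (by omega))).symm

end Charge

section Degree

variable {e h : ℕ} {κ : ℕ → ZMod e}

/-- A unit step contributes to the degree only when it touches a wall `⟨· + ρ, α⟩ = re` while
moving towards the side of `ρ`. As `0 < ⟨ρ, α⟩ < e`, such walls have `r ≤ 0` when the pairing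
increases and `r ≥ 1` when it decreases, and the hypotheses keep the step away from them. -/
theorem dval_eq_zero_of_step {x y : ℕ → ℝ} {i j s : ℕ} (hij : i ≠ j) (r : ℤ)
    (hρ : 0 < pairV e h κ (fun _ => 0) i j) (hρe : pairV e h κ (fun _ => 0) i j < e)
    (hy : ∀ a, y a = x a + if s = a then 1 else 0)
    (hi : s = i → 2 ≤ pairV e h κ y i j) (hj : s = j → pairV e h κ y i j + 2 ≤ e) :
    dval e h κ x y i j r = 0 := by
  have he : (0 : ℝ) < e := hρ.trans hρe
  have hr0 : (r : ℝ) * e < e → (r : ℝ) * e ≤ 0 := fun hlt => by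
    have : r < 1 := by exact_mod_cast (mul_lt_iff_lt_one_left he).1 hlt
    exact mul_nonpos_of_nonpos_of_nonneg (by exact_mod_cast Int.lt_add_one_iff.1 this) he.le
  have hr1 : 0 < (r : ℝ) * e → (e : ℝ) ≤ r * e := fun hlt => by
    have : 0 < r := by exact_mod_cast (pos_iff_pos_of_mul_pos hlt).2 he
    exact le_mul_of_one_le_left he.le (by exact_mod_cast this)
  have hxy : pairV e h κ x i j =
      pairV e h κ y i j - ((if s = i then 1 else 0) - if s = j then 1 else 0) := by
    simp only [pairV, hy]
    ring
  unfold dval OnWall InLt InGt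
  rw [hxy]
  set p := pairV e h κ (fun _ => 0) i j
  set B := pairV e h κ y i j
  by_cases hsi : s = i
  · have hB := hi hsi
    have hsj : s ≠ j := hsi ▸ hij
    rw [if_pos hsi, if_neg hsj, sub_zero]
    split_ifs with h1 h2
    · obtain ⟨hA, hpos⟩ := h1
      have : 0 < p - r * e := by nlinarith
      linarith [hr0 (by linarith)]
    · obtain ⟨hneg, hB'⟩ := h2
      have : 0 < p - r * e := by nlinarith
      linarith [hr0 (by linarith)]
    · rfl
  by_cases hsj : s = j
  · have hB := hj hsj
    rw [if_neg hsi, if_pos hsj, zero_sub, sub_neg_eq_add]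
    split_ifs with h1 h2
    · obtain ⟨hA, hpos⟩ := h1
      have : p - r * e < 0 := by nlinarith
      linarith [hr1 (by linarith)]
    · obtain ⟨hneg, hB'⟩ := h2
      have : p - r * e < 0 := by nlinarith
      linarith [hr1 (by linarith)]
    · rfl
  · rw [if_neg hsi, if_neg hsj, sub_zero, sub_zero]
    split_ifs with h1 h2
    · obtain ⟨hA, hpos⟩ := h1
      simp [hA] at hpos
    · obtain ⟨hneg, hB⟩ := h2
      simp [hB] at hneg
    · rfl

end Degree

section LastNodeColumns

variable {ℓ : ℕ} (μ : MultiPartition ℓ) {M : ℕ}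

theorem colLen_lastNode_col (hK : 0 < colLen μ M 1) :
    colLen μ M (μ.row M (colLen μ M 1 - 1)) = colLen μ M 1 := by
  have hc := (lastNode_mem μ hK).2.1
  simp only [lastNode] at hc
  have := (le_row_iff_lt_colLen μ M hc _).1 le_rfl
  have := colLen_antitone_s12 μ M le_rfl hc
  omega

theorem colLen_le_of_row_lt {b : ℕ} (hb : μ.row M (colLen μ M 1 - 1) < b) :
    colLen μ M b ≤ colLen μ M 1 - 1 := by
  by_contra! hlt
  have := (le_row_iff_lt_colLen μ M (by omega) _).2 (show colLen μ M 1 - 1 < colLen μ M b by omega)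
  omega

theorem IsRightmostComp.sub_le {t : ℕ} (hM : IsRightmostComp μ M) (ht : t < ℓ) (htM : t ≠ M)
    (hKt : 0 < colLen μ t 1) :
    (colLen μ t 1 : ℤ) - μ.row t (colLen μ t 1 - 1) ≤
        (colLen μ M 1 : ℤ) - μ.row M (colLen μ M 1 - 1) ∧
      (M < t → (colLen μ t 1 : ℤ) - μ.row t (colLen μ t 1 - 1) <
        (colLen μ M 1 : ℤ) - μ.row M (colLen μ M 1 - 1)) := by
  have := (thetaPos_lt_thetaPos_iff (b := lastNode μ t) (b' := lastNode μ M) ht hM.1).1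
    (hM.2.2 t ht htM hKt)
  simp only [lastNode] at this
  omega

end LastNodeColumns

section LastStep

variable {e h ℓ : ℕ} {κ : ℕ → ZMod e} {ν : MultiPartition ℓ} {M : ℕ}

theorem two_le_pairV_nodeIndex_lastNode [NeZero e] (hadm : HAdmissible e h ℓ κ)
    (hnorm : Normalized e h ℓ κ) (hc : HCols h ν) (hM : IsRightmostComp ν M) {m b : ℕ}
    (hm : m < ℓ) (hb : b < h) (hlt : nodeIndex h (lastNode ν M) < h * m + b) :
    2 ≤ pairV e h κ (ptD h (diag ν)) (nodeIndex h (lastNode ν M)) (h * m + b) := by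
  have hK := hM.2.1
  have hc1 : 1 ≤ ν.row M (colLen ν M 1 - 1) := (lastNode_mem ν hK).2.1
  have hch := hc M (colLen ν M 1 - 1)
  have hcol := colLen_antitone_s12 ν m le_rfl (Nat.le_add_left 1 b)
  change h * M + (ν.row M (colLen ν M 1 - 1) - 1) < _ at hlt
  change 2 ≤ pairV e h κ _ (h * M + (ν.row M (colLen ν M 1 - 1) - 1)) _
  rw [pairV_ptD_diag_mul_add e h κ ν (by omega) hb, Nat.sub_add_cancel hc1,
    colLen_lastNode_col ν hM.2.1, show (2 : ℝ) = ((2 : ℤ) : ℝ) by norm_num, Int.cast_le]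
  rcases (mul_add_lt_mul_add_iff (by omega) hb).1 hlt with hMm | ⟨rfl, hcb⟩
  · have hκ := val_add_le_val_of_lt hadm hnorm hMm hm
    rcases Nat.eq_zero_or_pos (colLen ν m 1) with h0 | hKm
    · omega
    · have := (hM.sub_le ν hm (ne_of_gt hMm) hKm).2 hMm
      have := hc m (colLen ν m 1 - 1)
      omega
  · have := colLen_le_of_row_lt ν (M := M) (b := b + 1) (by omega)
    omega

theorem pairV_nodeIndex_lastNode_add_two_le [NeZero e] (hh : 1 ≤ h) (he : h < e)
    (hadm : HAdmissible e h ℓ κ) (hnorm : Normalized e h ℓ κ) (hc : HCols h ν)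
    (hM : IsRightmostComp ν M) {m a : ℕ} (hm : m < ℓ) (ha : a < h)
    (hlt : h * m + a < nodeIndex h (lastNode ν M)) :
    pairV e h κ (ptD h (diag ν)) (h * m + a) (nodeIndex h (lastNode ν M)) + 2 ≤ e := by
  have hK := hM.2.1
  have hc1 : 1 ≤ ν.row M (colLen ν M 1 - 1) := (lastNode_mem ν hK).2.1
  have hch := hc M (colLen ν M 1 - 1)
  have hcol := colLen_antitone_s12 ν m le_rfl (Nat.le_add_left 1 a)
  change _ < h * M + (ν.row M (colLen ν M 1 - 1) - 1) at hlt
  change pairV e h κ _ _ (h * M + (ν.row M (colLen ν M 1 - 1) - 1)) + 2 ≤ _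
  rw [pairV_ptD_diag_mul_add e h κ ν ha (by omega), Nat.sub_add_cancel hc1,
    colLen_lastNode_col ν hM.2.1, show (2 : ℝ) = ((2 : ℤ) : ℝ) by norm_num,
    show (e : ℝ) = ((e : ℤ) : ℝ) by norm_num, ← Int.cast_add, Int.cast_le]
  rcases (mul_add_lt_mul_add_iff ha (by omega)).1 hlt with hmM | ⟨rfl, hac⟩
  · have hκ := val_add_lt_val_add_of_lt hh hadm hnorm hmM hM.1
    rcases Nat.eq_zero_or_pos (colLen ν m 1) with h0 | hKm
    · omega
    · have := (hM.sub_le ν hm (ne_of_lt hmM) hKm).1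
      have := hc m (colLen ν m 1 - 1)
      omega
  · omega

end LastStep

section StepDegree

variable {e h ℓ : ℕ} {κ : ℕ → ZMod e}

theorem pairV_zero_mem_Ioo [NeZero e] (hh : 1 ≤ h) (he : h < e) (hadm : HAdmissible e h ℓ κ)
    (hnorm : Normalized e h ℓ κ) {m m' a b : ℕ} (hm' : m' < ℓ) (ha : a < h) (hb : b < h)
    (hlt : h * m + a < h * m' + b) :
    pairV e h κ (fun _ => 0) (h * m + a) (h * m' + b) ∈ Set.Ioo 0 (e : ℝ) := by
  rw [pairV_zero_mul_add e h κ ha hb, Set.mem_Ioo, show (0 : ℝ) = ((0 : ℤ) : ℝ) by norm_num,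
    show (e : ℝ) = ((e : ℤ) : ℝ) by norm_num, Int.cast_lt, Int.cast_lt]
  rcases (mul_add_lt_mul_add_iff ha hb).1 hlt with hmm' | ⟨rfl, hab⟩
  · have := val_add_le_val_of_lt hadm hnorm hmm' hm'
    have := val_add_lt_val_add_of_lt hh hadm hnorm hmm' hm'
    omega
  · omega

theorem stepDeg_ptD_sdiff_leastRem [NeZero e] (hh : 1 ≤ h) (he : h < e)
    (hadm : HAdmissible e h ℓ κ) (hnorm : Normalized e h ℓ κ) {ν : MultiPartition ℓ}
    (hc : HCols h ν) (hne : (diag ν).Nonempty) :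
    stepDeg e h ℓ κ (ptD h (diag ν \ {leastRem ℓ (diag ν)})) (ptD h (diag ν)) = 0 := by
  obtain ⟨M, hM⟩ := exists_isRightmostComp ν hne
  have hy := ptD_diag_eq_add ν (lastNode_mem ν hM.2.1) (hc _ _)
  rw [hM.leastRem_eq]
  have hsplit : ∀ i < h * ℓ, ∃ m a, i = h * m + a ∧ m < ℓ ∧ a < h := fun i hi =>
    ⟨i / h, i % h, (Nat.div_add_mod i h).symm, Nat.div_lt_of_lt_mul hi, Nat.mod_lt _ (by omega)⟩
  refine Finset.sum_eq_zero fun i hi => Finset.sum_eq_zero fun j hj => ?_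
  split_ifs with hij
  · obtain ⟨m, a, rfl, hm, ha⟩ := hsplit i (Finset.mem_range.1 hi)
    obtain ⟨m', b, rfl, hm', hb⟩ := hsplit j (Finset.mem_range.1 hj)
    have hρ := pairV_zero_mem_Ioo hh he hadm hnorm hm' ha hb hij
    refine (finsum_congr fun r => dval_eq_zero_of_step hij.ne r hρ.1 hρ.2 hy ?_ ?_).trans
      finsum_zero
    · rintro hs
      rw [← hs] at hij ⊢
      exact two_le_pairV_nodeIndex_lastNode hadm hnorm hc hM hm' hb hij
    · rintro hs
      rw [← hs] at hij ⊢
      exact pairV_nodeIndex_lastNode_add_two_le hh he hadm hnorm hc hM hm ha hij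
  · rfl

end StepDegree

theorem statement_12 (h ℓ e n : ℕ) (κ : ℕ → ZMod e)
    (hh : 1 ≤ h) (hl : 1 ≤ ℓ) (he : h * ℓ < e)
    (hadm : HAdmissible e h ℓ κ) (hnorm : Normalized e h ℓ κ)
    (μ : MultiPartition ℓ) (hμ : size μ = n) (hμc : HCols h μ) :
    IsPath (h * ℓ) n (tPath h ℓ n μ) ∧
    (∀ k, k ≤ n → pts (tPath h ℓ n μ) k = ptD h (PDiag ℓ (diag μ) (n - k))) ∧
    DominantPath e h ℓ n κ (tPath h ℓ n μ) ∧
    pathDeg e h ℓ κ n (tPath h ℓ n μ) = 0 := by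
  have : NeZero e := ⟨by omega⟩
  have he' : h < e := (Nat.le_mul_of_pos_right h hl).trans_lt he
  have hpts k (hk : k ≤ n) := pts_tPath hμ hμc hk
  refine ⟨⟨fun k hk => ?_, fun k hk => if_neg (by omega)⟩, hpts, ?_, ?_⟩
  · obtain ⟨ν, hνc, hν, hne⟩ := exists_nonempty_diag_eq_PDiag hμc (j := n - 1 - k) (by omega)
    rw [tPath_of_lt hk, ← hν]
    exact nodeIndex_lt_of_mem_diag hνc (leastRem_mem hne)
  · intro k hk m i j _ hij hj
    obtain ⟨ν, -, hν, -⟩ := exists_diag_eq_PDiag hμc (j := n - k) (by omega)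
    rw [hpts k hk, ← hν]
    exact pairV_ptD_diag_pos e h κ ν m hij hj
  · refine Finset.sum_eq_zero fun k hk => ?_
    have hk := Finset.mem_range.1 hk
    obtain ⟨ν, hνc, hν, hne⟩ := exists_nonempty_diag_eq_PDiag hμc (j := n - 1 - k) (by omega)
    rw [hpts k hk.le, hpts (k + 1) hk, show n - k = n - 1 - k + 1 by omega,
      show n - (k + 1) = n - 1 - k by omega, PDiag, ← hν]
    exact stepDeg_ptD_sdiff_leastRem hh he' hadm hnorm hνc hne

end BC
end

section
/- Assume κ is h-admissible and normalized. For each 0 ≤ k ≤ hℓ, the point p_k = ε_1 + ε_2 + ⋯ + ε_k ∈ E is e-regular: ⟨p_k + ρ, α⟩ ∉ eℤ for every α ∈ Φ⁺. Consequently the path of length hℓ whose steps are ε_1, ε_2, …, ε_{hℓ} (in this order) has degree 0 and meets no hyperplane E(α, re). -/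
namespace BC

lemma no_mult (E n : ℤ) (r : ℤ) (hE : 0 < E) (h1 : -E < n) (h2 : n < E) (h0 : n ≠ 0) :
    n ≠ r * E := by
  rintro rfl
  rcases lt_trichotomy r 0 with hr | hr | hr
  · have : r ≤ -1 := by omega
    nlinarith
  · simp [hr] at h0
  · have : 1 ≤ r := by omega
    nlinarith

lemma regular (h ℓ e : ℕ) (κ : ℕ → ZMod e)
    (hh : 1 ≤ h) (hl : 1 ≤ ℓ) (he : h * ℓ < e)
    (hadm : HAdmissible e h ℓ κ) (hnorm : Normalized e h ℓ κ)
    (k i j : ℕ) (hij : i < j) (hj : j < h * ℓ) (r : ℤ) :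
    ((if i < k then (1:ℤ) else 0) + rhoZ e h κ i)
      - ((if j < k then (1:ℤ) else 0) + rhoZ e h κ j) ≠ r * e := by
  haveI : NeZero e := ⟨by omega⟩
  intro key
  simp only [rhoZ] at key
  obtain ⟨m, hm⟩ : ∃ m, i / h = m := ⟨_, rfl⟩
  obtain ⟨a, ha⟩ : ∃ a, i % h = a := ⟨_, rfl⟩
  obtain ⟨t, ht⟩ : ∃ t, j / h = t := ⟨_, rfl⟩
  obtain ⟨b, hb⟩ : ∃ b, j % h = b := ⟨_, rfl⟩
  have htl : t < ℓ := ht ▸ Nat.div_lt_of_lt_mul hj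
  have hml : m < ℓ := hm ▸ Nat.div_lt_of_lt_mul (lt_trans hij hj)
  have hi' : h * m + a = i := by rw [← hm, ← ha]; exact Nat.div_add_mod i h
  have hj' : h * t + b = j := by rw [← ht, ← hb]; exact Nat.div_add_mod j h
  have hmt : m ≤ t := by rw [← hm, ← ht]; exact Nat.div_le_div_right (le_of_lt hij)
  rw [hm, ha, ht, hb] at key
  obtain ⟨vm, hκm'⟩ : ∃ v, (κ m).val = v := ⟨_, rfl⟩
  obtain ⟨vt, hκt'⟩ : ∃ v, (κ t).val = v := ⟨_, rfl⟩
  rw [hκm', hκt'] at key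
  have hvm : vm < e := hκm' ▸ ZMod.val_lt _
  have hvt : vt < e := hκt' ▸ ZMod.val_lt _
  have hae : a < h := ha ▸ Nat.mod_lt _ (by omega)
  have hbe : b < h := hb ▸ Nat.mod_lt _ (by omega)
  have hκm : ((vm : ℕ) : ZMod e) = κ m := by rw [← hκm']; exact ZMod.natCast_zmod_val _
  have hκt : ((vt : ℕ) : ZMod e) = κ t := by rw [← hκt']; exact ZMod.natCast_zmod_val _
  obtain ⟨D, hD⟩ : ∃ D : ℤ, (if i < k then (1:ℤ) else 0) - (if j < k then 1 else 0) = D :=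
    ⟨_, rfl⟩
  have hD01 : D = 0 ∨ D = 1 := by
    rw [← hD]
    by_cases h1 : i < k <;> by_cases h2 : j < k <;> simp [h1, h2] <;> omega
  have key2 : D + ((vt : ℤ) + b) - ((vm : ℤ) + a) = r * e := by
    rw [← hD]; linarith [key]
  rcases eq_or_lt_of_le hmt with hmt' | hmt'
  · -- same component: 1 ≤ n ≤ h < e
    subst hmt'
    have hab : a < b := by omega
    have hvmt : vm = vt := by omega
    refine no_mult e _ r (by exact_mod_cast (by omega : (0:ℕ) < e)) ?_ ?_ ?_ key2 <;>
      omega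
  · -- different components
    have hlt : vm < vt := by rw [← hκm', ← hκt']; exact hnorm.1 m t hmt' htl
    have hr01 : r = 0 ∨ r = 1 := by
      have b1 : -(e:ℤ) < r * e := by rw [← key2]; omega
      have b2 : r * e < 2 * e := by rw [← key2]; omega
      have he0 : (0:ℤ) < e := by exact_mod_cast (by omega : (0:ℕ) < e)
      rcases le_or_gt r (-1) with h1 | h1
      · exfalso
        have : r * e ≤ (-1) * e := mul_le_mul_of_nonneg_right h1 (le_of_lt he0)
        linarith
      · rcases le_or_gt 2 r with h2 | h2
        · exfalso
          have : 2 * e ≤ r * e := mul_le_mul_of_nonneg_right h2 (le_of_lt he0)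
          linarith
        · omega
    rcases hr01 with rfl | rfl
    · -- n = 0 : κ t = κ m + δ with 1 ≤ δ < h
      rw [Int.zero_mul] at key2
      have hδh : vt - vm < h := by omega
      have hz : κ t = κ m + ((vt - vm : ℕ) : ZMod e) := by
        rw [← hκm, ← hκt, ← Nat.cast_add, show vm + (vt - vm) = vt from by omega]
      have := hadm (κ m) m t hml htl ⟨0, by omega, by simp⟩ ⟨vt - vm, hδh, hz⟩
      omega
    · -- n = e
      rw [Int.one_mul] at key2
      have hc1 : 1 ≤ vm + e - vt := by omega
      have hceq : ((vm + e - vt : ℕ) : ℤ) = D + b - a := by push_cast; omega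
      have hch : vm + e - vt ≤ h := by
        rcases hD01 with h1 | h1 <;> omega
      have hz : κ m = κ t + ((vm + e - vt : ℕ) : ZMod e) := by
        rw [← hκm, ← hκt, ← Nat.cast_add]
        have h2 : ((vm + e : ℕ) : ZMod e) = ((vt + (vm + e - vt) : ℕ) : ZMod e) := by
          congr 1
          omega
        rwa [Nat.cast_add vm e, ZMod.natCast_self, add_zero] at h2
      rcases lt_or_eq_of_le hch with hch' | hch'
      · have := hadm (κ t) t m htl hml ⟨0, by omega, by simp⟩ ⟨vm + e - vt, hch', hz⟩
        omega
      · -- vm + e - vt = h : use normalization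
        have gap : ∀ s s', s < s' → s' < ℓ → (κ s').val + h ≤ (κ s).val + e := by
          intro s s' hss hsl
          by_contra hcon
          push_neg at hcon
          have hv' : (κ s').val < e := ZMod.val_lt _
          have hg2 : (κ s).val + e - (κ s').val < h := by omega
          have hzz : κ s = κ s' + (((κ s).val + e - (κ s').val : ℕ) : ZMod e) := by
            have h2 : (((κ s).val + e : ℕ) : ZMod e)
                = (((κ s').val + ((κ s).val + e - (κ s').val) : ℕ) : ZMod e) := by
              congr 1
              omega
            rw [Nat.cast_add ((κ s).val) e, ZMod.natCast_self, add_zero,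
              ZMod.natCast_zmod_val, Nat.cast_add, ZMod.natCast_zmod_val] at h2
            exact h2
          have := hadm (κ s') s' s hsl (lt_trans hss hsl) ⟨0, by omega, by simp⟩
            ⟨(κ s).val + e - (κ s').val, hg2, hzz⟩
          omega
        have hmll : m < ℓ - 1 := by omega
        have g1 := gap m (ℓ - 1) hmll (by omega)
        rw [hκm'] at g1
        have hvl : vt ≤ (κ (ℓ - 1)).val := by
          rcases lt_or_eq_of_le (show t ≤ ℓ - 1 from by omega) with h1 | h1
          · exact le_of_lt (hκt' ▸ hnorm.1 t (ℓ - 1) h1 (by omega))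
          · rw [← hκt', h1]
        have hveq1 : (κ (ℓ - 1)).val = vt := by omega
        have g2 := gap 0 t (by omega) htl
        rw [hκt'] at g2
        have hv0 : (κ 0).val ≤ vm := by
          rcases Nat.eq_zero_or_pos m with h1 | h1
          · rw [← hκm', h1]
          · exact le_of_lt (hκm' ▸ hnorm.1 0 m h1 hml)
        have hveq0 : (κ 0).val = vm := by omega
        apply hnorm.2
        have e1 : κ (ℓ - 1) = κ t := by
          rw [← ZMod.natCast_zmod_val (κ (ℓ - 1)), hveq1, hκt]
        have e0 : κ 0 = κ m := by
          rw [← ZMod.natCast_zmod_val (κ 0), hveq0, hκm]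
        rw [e1, e0, hz, show vm + e - vt = h from hch']

lemma pts_eq (N k : ℕ) (hk : k ≤ N) :
    pts (fun k' => if k' < N then k' else 0) k = fun a => if a < k then (1:ℝ) else 0 := by
  funext a
  unfold pts
  have hcong : Finset.filter (fun i => (if i < N then i else 0) = a) (Finset.range k)
      = Finset.filter (fun i => i = a) (Finset.range k) := by
    apply Finset.filter_congr
    intro i hi
    simp only [Finset.mem_range] at hi
    rw [if_pos (lt_of_lt_of_le hi hk)]
  rw [hcong, Finset.filter_eq']
  by_cases hka : a < k
  · simp [Finset.mem_range, hka]
  · simp [Finset.mem_range, hka]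


theorem statement_13 (h ℓ e : ℕ) (κ : ℕ → ZMod e)
    (hh : 1 ≤ h) (hl : 1 ≤ ℓ) (he : h * ℓ < e)
    (hadm : HAdmissible e h ℓ κ) (hnorm : Normalized e h ℓ κ) :
    (∀ k, k ≤ h * ℓ → ∀ i j : ℕ, i < j → j < h * ℓ → ∀ r : ℤ,
      pairV e h κ (fun a => if a < k then (1 : ℝ) else 0) i j ≠ (r : ℝ) * (e : ℝ)) ∧
    pathDeg e h ℓ κ (h * ℓ) (fun k => if k < h * ℓ then k else 0) = 0 ∧
    (∀ k, k ≤ h * ℓ → ∀ i j : ℕ, i < j → j < h * ℓ → ∀ r : ℤ,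
      ¬ OnWall e h κ (pts (fun k' => if k' < h * ℓ then k' else 0) k) i j r) := by
  have reg : ∀ k, k ≤ h * ℓ → ∀ i j : ℕ, i < j → j < h * ℓ → ∀ r : ℤ,
      pairV e h κ (fun a => if a < k then (1 : ℝ) else 0) i j ≠ (r : ℝ) * (e : ℝ) := by
    intro k hk i j hij hj r heq
    apply regular h ℓ e κ hh hl he hadm hnorm k i j hij hj r
    have key : pairV e h κ (fun a => if a < k then (1 : ℝ) else 0) i j
        = ((((if i < k then (1:ℤ) else 0) + rhoZ e h κ i)
          - ((if j < k then (1:ℤ) else 0) + rhoZ e h κ j) : ℤ) : ℝ) := by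
      unfold pairV
      by_cases h1 : i < k <;> by_cases h2 : j < k <;> simp [h1, h2] <;> push_cast <;> ring
    rw [key] at heq
    exact_mod_cast heq
  have h3 : ∀ k, k ≤ h * ℓ → ∀ i j : ℕ, i < j → j < h * ℓ → ∀ r : ℤ,
      ¬ OnWall e h κ (pts (fun k' => if k' < h * ℓ then k' else 0) k) i j r := by
    intro k hk i j hij hj r hw
    unfold OnWall at hw
    rw [pts_eq (h * ℓ) k hk] at hw
    exact reg k hk i j hij hj r hw
  refine ⟨reg, ?_, h3⟩
  unfold pathDeg
  apply Finset.sum_eq_zero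
  intro k hk
  rw [Finset.mem_range] at hk
  unfold stepDeg
  apply Finset.sum_eq_zero
  intro i hi
  apply Finset.sum_eq_zero
  intro j hj
  rw [Finset.mem_range] at hj
  split
  · next hij =>
    apply finsum_eq_zero_of_forall_eq_zero
    intro r
    have w1 := h3 k (le_of_lt hk) i j hij hj r
    have w2 := h3 (k + 1) hk i j hij hj r
    simp [dval, w1, w2]
  · rfl

end BC
end

section
/- Assume κ is h-admissible. Then for all 1 ≤ m, t ≤ ℓ and 1 ≤ i, j ≤ h with (m,i) ≠ (t,j), one has κ_m + i ≠ κ_t + j in ℤ/eℤ. Consequently ⟨ρ, ε_{h(m−1)+i} − ε_{h(t−1)+j}⟩ ∉ eℤ for every such pair; that is, the origin of E is e-regular (it lies on no hyperplane E(α, re) with α ∈ Φ⁺ and r ∈ ℤ). -/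
namespace BC

theorem statement_14 (h ℓ e : ℕ) (κ : ℕ → ZMod e)
    (hh : 1 ≤ h) (hl : 1 ≤ ℓ) (he : h * ℓ < e)
    (hadm : HAdmissible e h ℓ κ) :
    (∀ m t i j : ℕ, 1 ≤ m → m ≤ ℓ → 1 ≤ t → t ≤ ℓ → 1 ≤ i → i ≤ h → 1 ≤ j → j ≤ h →
      (m, i) ≠ (t, j) → κ (m - 1) + (i : ZMod e) ≠ κ (t - 1) + (j : ZMod e)) ∧
    (∀ a a' : ℕ, a < a' → a' < h * ℓ → ∀ r : ℤ,
      pairV e h κ (fun _ => (0 : ℝ)) a a' ≠ (r : ℝ) * (e : ℝ)) := by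
  have hhl : 1 ≤ h * ℓ := Nat.mul_pos hh hl
  have he2 : 2 ≤ e := by omega
  have hhe : h < e := by nlinarith
  haveI : NeZero e := ⟨by omega⟩
  have part1 : ∀ m t i j : ℕ, 1 ≤ m → m ≤ ℓ → 1 ≤ t → t ≤ ℓ → 1 ≤ i → i ≤ h → 1 ≤ j → j ≤ h →
      (m, i) ≠ (t, j) → κ (m - 1) + (i : ZMod e) ≠ κ (t - 1) + (j : ZMod e) := by
    intro m t i j hm1 hm ht1 ht hi1 hi hj1 hj hne heq
    by_cases hmt : m = t
    · subst hmt
      have hij : (i : ZMod e) = (j : ZMod e) := by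
        rwa [add_right_inj] at heq
      have hij' : i = j := by
        have h1 : ((i : ℕ) : ZMod e).val = i := ZMod.val_natCast_of_lt (by omega)
        have h2 : ((j : ℕ) : ZMod e).val = j := ZMod.val_natCast_of_lt (by omega)
        rw [← h1, ← h2, hij]
      exact hne (by rw [hij'])
    · rcases le_total i j with hij | hij
      · have hji : (j : ZMod e) = (i : ZMod e) + ((j - i : ℕ) : ZMod e) := by
          rw [← Nat.cast_add]
          exact congrArg _ (by omega)
        have hd : κ (m - 1) = κ (t - 1) + ((j - i : ℕ) : ZMod e) := by
          linear_combination heq + hji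
        have := hadm (κ (t - 1)) (m - 1) (t - 1) (by omega) (by omega)
          ⟨j - i, by omega, hd⟩ ⟨0, by omega, by simp⟩
        exact hmt (by omega)
      · have hji : (i : ZMod e) = (j : ZMod e) + ((i - j : ℕ) : ZMod e) := by
          rw [← Nat.cast_add]
          exact congrArg _ (by omega)
        have hd : κ (t - 1) = κ (m - 1) + ((i - j : ℕ) : ZMod e) := by
          linear_combination -heq + hji
        have := hadm (κ (m - 1)) (m - 1) (t - 1) (by omega) (by omega)
          ⟨0, by omega, by simp⟩ ⟨i - j, by omega, hd⟩
        exact hmt (by omega)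
  refine ⟨part1, ?_⟩
  intro a a' hlt hbound r heq
  have hma : a / h < ℓ := Nat.div_lt_of_lt_mul (by omega)
  have hma' : a' / h < ℓ := Nat.div_lt_of_lt_mul (by omega)
  have hmha : a % h < h := Nat.mod_lt _ (by omega)
  have hmha' : a' % h < h := Nat.mod_lt _ (by omega)
  have hdm  := Nat.div_add_mod a h
  have hdm' := Nat.div_add_mod a' h
  -- the pairing is an integer equation
  have hint : rhoZ e h κ a - rhoZ e h κ a' = r * e := by
    have : ((rhoZ e h κ a - rhoZ e h κ a' : ℤ) : ℝ) = ((r * e : ℤ) : ℝ) := by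
      unfold pairV at heq
      push_cast
      push_cast at heq
      linarith
    exact_mod_cast this
  have hint2 : (((κ (a' / h)).val : ℤ) + ((a' % h : ℕ) : ℤ)) -
      (((κ (a / h)).val : ℤ) + ((a % h : ℕ) : ℤ)) = r * e := by
    unfold rhoZ at hint
    linarith
  -- reduce mod e
  have hz : κ (a' / h) + ((a' % h : ℕ) : ZMod e) = κ (a / h) + ((a % h : ℕ) : ZMod e) := by
    have := congrArg (Int.cast : ℤ → ZMod e) hint2
    simp only [Int.cast_sub, Int.cast_add, Int.cast_natCast, Int.cast_mul,
      ZMod.natCast_val, ZMod.intCast_cast, ZMod.cast_id, ZMod.natCast_self,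
      mul_zero] at this
    linear_combination this
  -- apply part1
  have hne : ((a / h + 1 : ℕ), (a % h + 1 : ℕ)) ≠ ((a' / h + 1 : ℕ), (a' % h + 1 : ℕ)) := by
    intro hpq
    have h1 : a / h = a' / h := by
      have := congrArg Prod.fst hpq; simpa using this
    have h2 : a % h = a' % h := by
      have := congrArg Prod.snd hpq; simpa using this
    rw [← hdm, ← hdm', h1, h2] at hlt
    exact lt_irrefl _ hlt
  have := part1 (a / h + 1) (a' / h + 1) (a % h + 1) (a' % h + 1)
    (Nat.le_add_left _ _) hma (Nat.le_add_left _ _) hma'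
    (Nat.le_add_left _ _) hmha (Nat.le_add_left _ _) hmha' hne
  apply this
  simp only [Nat.add_sub_cancel]
  push_cast
  linear_combination -hz

end BC
end
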